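/- arXiv:1008.3015 — 8 statements merged into one kernel-verified Lean document; each statement's English description precedes it below -/
import Mathlib

section
/- For every integer n ≥ 3 and every color k ∈ C = {0,1,...,n−1} there exists a finite simple graph L with two designated vertices x and y and n further pairwise distinct designated vertices r_0,...,r_{n−1} inducing a complete subgraph, such that: (i) every partial assignment σ₀ with σ₀(r_i) = i for all i and σ₀(x) = k extends uniquely to a proper n-coloring of L, and in that coloring y also receives color k; symmetrically, every partial assignment with σ₀(r_i) = i and σ₀(y) = k extends uniquely, and in it x receives color k; in particular, in every proper n-coloring σ of L with σ(r_i) = i for all i, σ(x) = k if and only if σ(y) = k; (ii) for every pair of colors a, b ∈ C \ {k}, the assignment σ₀(x) = a, σ₀(y) = b, σ₀(r_i) = i for all i extends uniquely to a proper n-coloring of L; (iii) L has exactly 4n − 3 vertices and exactly n(7n−11)/2 edges. -/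
/-! The colors other than `k` are enumerated cyclically as `c j = k.succAbove j`, `j : Fin (n - 1)`.
Besides the reference clique `r`, the gadget has vertices `a j` and `b j` joined to every reference
vertex except those of colors `k, c j` resp. `k, c (j + 1)`, so that `a j` is colored `k` or `c j`
and `b j` is colored `k` or `c (j + 1)`; `x` and `y` are joined to every `a j`, and `b j` to `a j`
and `a (j + 1)`. If `x` is colored `k`, every `a j` is colored `c j`, which forces every `b j` to
be `k` and leaves only `k` for `y`. If `x` is colored `c j₀`, then `a j₀` is `k`, and `a j = k`
forces `b j = c (j + 1)` and hence `a (j + 1) = k`; going around the cycle, every `a j` is `k`,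
so `y` is not, and the colors of `x` and `y` determine everything. Further `n - 3` vertices, each
joined to `a 0` and to all reference vertices but one, bring the counts to `4n - 3` vertices and
`n(7n - 11)/2` edges. -/

def IsProperColoring {V : Type} (G : SimpleGraph V) {n : ℕ} (σ : V → Fin n) : Prop :=
  ∀ ⦃u v : V⦄, G.Adj u v → σ u ≠ σ v

open Finset

theorem SimpleGraph.card_edgeSet_fromRel {V : Type*} {r : V → V → Prop}
    (hr : ∀ u v, r u v → ¬ r v u) :
    Nat.card (fromRel r).edgeSet = Nat.card {p : V × V // r p.1 p.2} := by
  symm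
  refine Nat.card_eq_of_bijective (fun p => ⟨s(p.1.1, p.1.2), ?_⟩) ⟨?_, ?_⟩
  · exact (fromRel_adj r _ _).2 ⟨fun h => hr _ _ p.2 (h ▸ p.2), .inl p.2⟩
  · rintro ⟨⟨u, v⟩, huv⟩ ⟨⟨u', v'⟩, huv'⟩ h
    rcases Sym2.eq_iff.1 (congrArg Subtype.val h) with ⟨rfl, rfl⟩ | ⟨rfl, rfl⟩
    · rfl
    · exact (hr _ _ huv huv').elim
  · rintro ⟨e, he⟩
    induction e using Sym2.ind with
    | _ u v =>
      obtain ⟨-, huv | hvu⟩ := (fromRel_adj r u v).1 he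
      · exact ⟨⟨(u, v), huv⟩, rfl⟩
      · exact ⟨⟨(v, u), hvu⟩, Subtype.ext Sym2.eq_swap⟩

theorem isProperColoring_fromRel {V : Type} {r : V → V → Prop} {n : ℕ} {σ : V → Fin n}
    (h : ∀ u v, r u v → σ u ≠ σ v) : IsProperColoring (SimpleGraph.fromRel r) σ := by
  rintro u v ⟨-, huv | hvu⟩
  exacts [h u v huv, (h v u hvu).symm]

open Fin.NatCast in
theorem Fin.forall_of_add_one_closed {n : ℕ} [NeZero n] {P : Fin n → Prop} {i : Fin n}
    (hi : P i) (step : ∀ j, P j → P (j + 1)) (j : Fin n) : P j := by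
  have key : ∀ t : ℕ, P (i + (t : Fin n)) := by
    intro t
    induction t with
    | zero => simpa using hi
    | succ t ih => simpa [Nat.cast_succ, ← add_assoc] using step _ ih
  simpa using key (j - i).val

theorem Finset.card_filter_ne_and_ne {α : Type*} [Fintype α] [DecidableEq α] {a b : α}
    (h : a ≠ b) : #{c | c ≠ a ∧ c ≠ b} = Fintype.card α - 2 := by
  have : ({c | c ≠ a ∧ c ≠ b} : Finset α) = univ \ {a, b} := by ext; simp
  rw [this, card_sdiff_of_subset (subset_univ _), card_univ, card_pair h]

theorem Finset.card_filter_eq_or_eq {α : Type*} [Fintype α] [DecidableEq α] {a b : α}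
    (h : a ≠ b) : #{c | c = a ∨ c = b} = 2 := by
  have : ({c | c = a ∨ c = b} : Finset α) = {a, b} := by ext; simp
  rw [this, card_pair h]

namespace EqualityGadget

abbrev Vertex (m : ℕ) := Fin (m + 3) ⊕ Bool ⊕ Fin (m + 2) ⊕ Fin (m + 2) ⊕ Fin m

variable {m : ℕ}

def r (c : Fin (m + 3)) : Vertex m := .inl c
def x : Vertex m := .inr (.inl false)
def y : Vertex m := .inr (.inl true)
def a (j : Fin (m + 2)) : Vertex m := .inr (.inr (.inl j))
def b (j : Fin (m + 2)) : Vertex m := .inr (.inr (.inr (.inl j)))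
def pad (i : Fin m) : Vertex m := .inr (.inr (.inr (.inr i)))

/-- Every edge is listed once, in one orientation, so that edges are counted as arcs. -/
def arc (k : Fin (m + 3)) : Vertex m → Vertex m → Bool
  | .inl c, .inl d => d < c
  | .inr (.inl _), .inr (.inr (.inl _)) => true
  | .inr (.inr (.inl j)), .inl c => c ≠ k ∧ c ≠ k.succAbove j
  | .inr (.inr (.inr (.inl j))), .inl c => c ≠ k ∧ c ≠ k.succAbove (j + 1)
  | .inr (.inr (.inr (.inl j))), .inr (.inr (.inl i)) => i = j ∨ i = j + 1
  | .inr (.inr (.inr (.inr _))), .inl c => c ≠ k.succAbove 1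
  | .inr (.inr (.inr (.inr _))), .inr (.inr (.inl j)) => j = 0
  | _, _ => false

theorem arc_asymm (k : Fin (m + 3)) (u v : Vertex m) : arc k u v → ¬ arc k v u := by
  rcases u with c | _ | j | j | i <;> rcases v with d | _ | i | i | i <;>
    simp +contextual [arc, le_of_lt]

def gadget (k : Fin (m + 3)) : SimpleGraph (Vertex m) := .fromRel (arc k · ·)

theorem gadget_adj {k : Fin (m + 3)} {u v : Vertex m} (h : arc k u v) : (gadget k).Adj u v :=
  ⟨fun huv => arc_asymm k u v h (huv ▸ h), .inl h⟩

theorem card_vertex : Fintype.card (Vertex m) = 4 * (m + 3) - 3 := by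
  simp only [Fintype.card_sum, Fintype.card_fin, Fintype.card_bool]
  omega

theorem card_arcs (k : Fin (m + 3)) :
    Nat.card {p : Vertex m × Vertex m // arc k p.1 p.2} =
      (m + 3) * (m + 2) / 2 + 2 * (m + 2) + (m + 2) * (m + 1) + (m + 2) * (m + 1 + 2) +
        m * (m + 2 + 1) := by
  rw [Nat.card_eq_fintype_card, Fintype.card_subtype, card_filter, Fintype.sum_prod_type]
  have hk : ∀ j : Fin (m + 2), k ≠ k.succAbove j := fun j => (Fin.succAbove_ne k j).symm
  have hj : ∀ j : Fin (m + 2), j ≠ j + 1 := fun j => by simp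
  simp only [Fintype.sum_sum_type, arc]
  simp [card_filter_ne_and_ne (hk _), card_filter_eq_or_eq (hj _), filter_gt_eq_Iio, Fin.card_Iio,
    Fin.sum_univ_eq_sum_range (fun i => i), sum_range_id, Finset.sum_ite, filter_ne', add_assoc]

theorem card_edgeSet_gadget (k : Fin (m + 3)) :
    Nat.card (gadget k).edgeSet = (m + 3) * (7 * (m + 3) - 11) / 2 := by
  rw [gadget, SimpleGraph.card_edgeSet_fromRel (arc_asymm k), card_arcs,
    show 7 * (m + 3) - 11 = 7 * m + 10 by omega]
  simp only [add_assoc, ← Nat.add_mul_div_left _ _ two_pos]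
  congr 1
  ring

variable {k : Fin (m + 3)}

theorem adj_r_r {c d : Fin (m + 3)} (h : c ≠ d) : (gadget k).Adj (r c) (r d) := by
  rcases h.lt_or_gt with h | h
  · exact (gadget_adj (by simpa [arc, r] using h)).symm
  · exact gadget_adj (by simpa [arc, r] using h)

theorem adj_x_a (j : Fin (m + 2)) : (gadget k).Adj x (a j) := gadget_adj (by simp [arc, x, a])

theorem adj_y_a (j : Fin (m + 2)) : (gadget k).Adj y (a j) := gadget_adj (by simp [arc, y, a])

theorem adj_a_r {j : Fin (m + 2)} {c : Fin (m + 3)} (hk : c ≠ k) (hj : c ≠ k.succAbove j) :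
    (gadget k).Adj (a j) (r c) :=
  gadget_adj (by simp [arc, a, r, hk, hj])

theorem adj_b_r {j : Fin (m + 2)} {c : Fin (m + 3)} (hk : c ≠ k)
    (hj : c ≠ k.succAbove (j + 1)) :
    (gadget k).Adj (b j) (r c) :=
  gadget_adj (by simp [arc, b, r, hk, hj])

theorem adj_b_a (j : Fin (m + 2)) : (gadget k).Adj (b j) (a j) := gadget_adj (by simp [arc, a, b])

theorem adj_b_a_add_one (j : Fin (m + 2)) : (gadget k).Adj (b j) (a (j + 1)) :=
  gadget_adj (by simp [arc, a, b])

theorem adj_pad_r {i : Fin m} {c : Fin (m + 3)} (h : c ≠ k.succAbove 1) :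
    (gadget k).Adj (pad i) (r c) :=
  gadget_adj (by simp [arc, pad, r, h])

def eqColoring (k : Fin (m + 3)) : Vertex m → Fin (m + 3)
  | .inl c => c
  | .inr (.inl _) => k
  | .inr (.inr (.inl j)) => k.succAbove j
  | .inr (.inr (.inr (.inl _))) => k
  | .inr (.inr (.inr (.inr _))) => k.succAbove 1

def neColoring (k cx cy : Fin (m + 3)) : Vertex m → Fin (m + 3)
  | .inl c => c
  | .inr (.inl false) => cx
  | .inr (.inl true) => cy
  | .inr (.inr (.inl _)) => k
  | .inr (.inr (.inr (.inl j))) => k.succAbove (j + 1)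
  | .inr (.inr (.inr (.inr _))) => k.succAbove 1

theorem isProperColoring_eqColoring (k : Fin (m + 3)) :
    IsProperColoring (gadget k) (eqColoring k) := by
  refine isProperColoring_fromRel fun u v huv => ?_
  rcases u with c | _ | j | j | i <;> rcases v with d | _ | i | i | i <;>
    simp [arc, eqColoring] at huv ⊢
  all_goals rintro rfl; simp_all

theorem isProperColoring_neColoring {cx cy : Fin (m + 3)} (hx : cx ≠ k) (hy : cy ≠ k) :
    IsProperColoring (gadget k) (neColoring k cx cy) := by
  refine isProperColoring_fromRel fun u v huv => ?_
  rcases u with c | (_ | _) | j | j | i <;> rcases v with d | (_ | _) | i | i | i <;>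
    simp [arc, neColoring] at huv ⊢
  all_goals rintro rfl; simp_all

variable {σ : Vertex m → Fin (m + 3)}

theorem color_a (hσ : IsProperColoring (gadget k) σ) (hr : ∀ c, σ (r c) = c)
    (j : Fin (m + 2)) :
    σ (a j) = k ∨ σ (a j) = k.succAbove j := by
  by_contra! h
  exact hσ (adj_a_r h.1 h.2) (hr _).symm

theorem color_b (hσ : IsProperColoring (gadget k) σ) (hr : ∀ c, σ (r c) = c)
    (j : Fin (m + 2)) :
    σ (b j) = k ∨ σ (b j) = k.succAbove (j + 1) := by
  by_contra! h
  exact hσ (adj_b_r h.1 h.2) (hr _).symm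

theorem color_pad (hσ : IsProperColoring (gadget k) σ) (hr : ∀ c, σ (r c) = c) (i : Fin m) :
    σ (pad i) = k.succAbove 1 := by
  by_contra h
  exact hσ (adj_pad_r h) (hr _).symm

theorem color_a_of_x_eq (hσ : IsProperColoring (gadget k) σ) (hr : ∀ c, σ (r c) = c)
    (hx : σ x = k) (j : Fin (m + 2)) : σ (a j) = k.succAbove j :=
  (color_a hσ hr j).resolve_left fun h => hσ (adj_x_a j) (hx.trans h.symm)

theorem color_b_of_x_eq (hσ : IsProperColoring (gadget k) σ) (hr : ∀ c, σ (r c) = c)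
    (hx : σ x = k) (j : Fin (m + 2)) : σ (b j) = k :=
  (color_b hσ hr j).resolve_right fun h =>
    hσ (adj_b_a_add_one j) (h.trans (color_a_of_x_eq hσ hr hx (j + 1)).symm)

theorem color_y_of_x_eq (hσ : IsProperColoring (gadget k) σ) (hr : ∀ c, σ (r c) = c)
    (hx : σ x = k) : σ y = k := by
  by_contra h
  obtain ⟨j, hj⟩ := Fin.exists_succAbove_eq h
  exact hσ (adj_y_a j) (by rw [color_a_of_x_eq hσ hr hx, hj])

theorem eq_eqColoring (hσ : IsProperColoring (gadget k) σ) (hr : ∀ c, σ (r c) = c)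
    (hx : σ x = k) : σ = eqColoring k := by
  funext v
  rcases v with c | (_ | _) | j | j | i
  exacts [hr c, hx, color_y_of_x_eq hσ hr hx, color_a_of_x_eq hσ hr hx j,
    color_b_of_x_eq hσ hr hx j, color_pad hσ hr i]

theorem color_a_of_x_ne (hσ : IsProperColoring (gadget k) σ) (hr : ∀ c, σ (r c) = c)
    (hx : σ x ≠ k) (j : Fin (m + 2)) : σ (a j) = k := by
  obtain ⟨j₀, hj₀⟩ := Fin.exists_succAbove_eq hx
  refine Fin.forall_of_add_one_closed (P := fun j => σ (a j) = k) (i := j₀) ?_ (fun j hj => ?_) j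
  · exact (color_a hσ hr j₀).resolve_right fun h => hσ (adj_x_a j₀) (hj₀.symm.trans h.symm)
  · have hb : σ (b j) = k.succAbove (j + 1) :=
      (color_b hσ hr j).resolve_left fun h => hσ (adj_b_a j) (h.trans hj.symm)
    exact (color_a hσ hr (j + 1)).resolve_right fun h =>
      hσ (adj_b_a_add_one j) (hb.trans h.symm)

theorem color_y_of_x_ne (hσ : IsProperColoring (gadget k) σ) (hr : ∀ c, σ (r c) = c)
    (hx : σ x ≠ k) : σ y ≠ k :=
  fun h => hσ (adj_y_a 0) (h.trans (color_a_of_x_ne hσ hr hx 0).symm)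

theorem eq_neColoring (hσ : IsProperColoring (gadget k) σ) (hr : ∀ c, σ (r c) = c)
    (hx : σ x ≠ k) : σ = neColoring k (σ x) (σ y) := by
  funext v
  rcases v with c | (_ | _) | j | j | i
  · exact hr c
  · rfl
  · rfl
  · exact color_a_of_x_ne hσ hr hx j
  · exact (color_b hσ hr j).resolve_left fun h =>
      hσ (adj_b_a j) (h.trans (color_a_of_x_ne hσ hr hx j).symm)
  · exact color_pad hσ hr i

theorem color_x_eq_iff_color_y_eq (hσ : IsProperColoring (gadget k) σ)
    (hr : ∀ c, σ (r c) = c) :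
    σ x = k ↔ σ y = k :=
  ⟨color_y_of_x_eq hσ hr, not_imp_not.1 (color_y_of_x_ne hσ hr)⟩

end EqualityGadget

/-- For every `n ≥ 3` and every color `k ∈ {0,…,n-1}` there is a finite simple graph `L`
with designated vertices `x`, `y` and pairwise distinct reference vertices `r 0, …, r (n-1)`
inducing a complete subgraph, such that:
(i) the partial assignment `r i ↦ i`, `x ↦ k` extends uniquely to a proper `n`-coloring, in
which `y` gets color `k` as well (and symmetrically with the roles of `x` and `y` swapped);
in particular in every proper `n`-coloring `σ` with `σ (r i) = i`, `σ x = k ↔ σ y = k`;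
(ii) for all colors `a, b ≠ k`, the assignment `r i ↦ i`, `x ↦ a`, `y ↦ b` extends uniquely
to a proper `n`-coloring;
(iii) `L` has exactly `4n − 3` vertices and `n(7n−11)/2` edges. -/
theorem statement1 (n : ℕ) (hn : 3 ≤ n) (k : Fin n) :
    ∃ (V : Type) (_ : Fintype V) (G : SimpleGraph V) (x y : V) (r : Fin n → V)
      (hE : Fintype G.edgeSet),
      Function.Injective r ∧
      (∀ i j : Fin n, i ≠ j → G.Adj (r i) (r j)) ∧
      -- (i)
      (∃! σ : V → Fin n, IsProperColoring G σ ∧ (∀ i, σ (r i) = i) ∧ σ x = k) ∧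
      (∃! σ : V → Fin n, IsProperColoring G σ ∧ (∀ i, σ (r i) = i) ∧ σ y = k) ∧
      (∀ σ : V → Fin n, IsProperColoring G σ → (∀ i, σ (r i) = i) →
        (σ x = k ↔ σ y = k)) ∧
      -- (ii)
      (∀ a b : Fin n, a ≠ k → b ≠ k →
        ∃! σ : V → Fin n,
          IsProperColoring G σ ∧ (∀ i, σ (r i) = i) ∧ σ x = a ∧ σ y = b) ∧
      -- (iii)
      Fintype.card V = 4 * n - 3 ∧
      @Fintype.card G.edgeSet hE = n * (7 * n - 11) / 2 := by
  obtain ⟨m, rfl⟩ : ∃ m, n = m + 3 := ⟨n - 3, by omega⟩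
  open EqualityGadget in
  exact ⟨Vertex m, inferInstance, gadget k, x, y, r, Fintype.ofFinite _, Sum.inl_injective,
    fun _ _ => adj_r_r,
    ⟨eqColoring k, ⟨isProperColoring_eqColoring k, fun _ => rfl, rfl⟩,
      fun σ ⟨hσ, hr, hx⟩ => eq_eqColoring hσ hr hx⟩,
    ⟨eqColoring k, ⟨isProperColoring_eqColoring k, fun _ => rfl, rfl⟩,
      fun σ ⟨hσ, hr, hy⟩ => eq_eqColoring hσ hr ((color_x_eq_iff_color_y_eq hσ hr).2 hy)⟩,
    fun σ => color_x_eq_iff_color_y_eq,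
    fun cx cy hx hy => ⟨neColoring k cx cy,
      ⟨isProperColoring_neColoring hx hy, fun _ => rfl, rfl, rfl⟩,
      by rintro σ ⟨hσ, hr, rfl, rfl⟩; exact eq_neColoring hσ hr hx⟩,
    card_vertex,
    (@Nat.card_eq_fintype_card _ (Fintype.ofFinite _)).symm.trans (card_edgeSet_gadget k)⟩
end

section
/- Let ψ : S^p ⇀ S^q be a one-to-one partial function (injective on its domain). If a finite simple graph G with input vertices x_0,...,x_{p−1}, output vertices y_0,...,y_{q−1} and reference vertices r_0,...,r_{n−1} simulates ψ through n-colorings, then the same graph G with the roles of the two lists swapped — input vertices y_0,...,y_{q−1} and output vertices x_0,...,x_{p−1} — simulates the inverse partial function ψ^{−1} : S^q ⇀ S^p (defined exactly on the range of ψ, with ψ^{−1}(ψ(x)) = x) through n-colorings. -/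
/-- The graph `G`, with input vertices `x`, output vertices `y` and reference vertices `r`,
simulates the partial function `φ : S^p ⇀ S^q` (encoded via `Option`) through `n`-colorings,
where `S = {0,…,m-1}` is identified with the first `m` colors of `C = {0,…,n-1}`. -/
def Simulates {V : Type} (G : SimpleGraph V) (m n : ℕ) {p q : ℕ}
    (φ : (Fin p → Fin m) → Option (Fin q → Fin m))
    (x : Fin p → V) (y : Fin q → V) (r : Fin n → V) : Prop :=
  Function.Injective r ∧
  (∃ σ : V → Fin n, IsProperColoring G σ) ∧
  (∀ σ : V → Fin n, IsProperColoring G σ → Function.Injective fun i => σ (r i)) ∧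
  ∀ a : Fin p → Fin n,
    ((∃ σ : V → Fin n, IsProperColoring G σ ∧ (∀ i, σ (r i) = i) ∧ ∀ j, σ (x j) = a j) ↔
      ∃ a' : Fin p → Fin m, (∀ j, (a j : ℕ) = (a' j : ℕ)) ∧ (φ a').isSome) ∧
    (∀ σ τ : V → Fin n, IsProperColoring G σ → IsProperColoring G τ →
      (∀ i, σ (r i) = i) → (∀ i, τ (r i) = i) →
      (∀ j, σ (x j) = a j) → (∀ j, τ (x j) = a j) → σ = τ) ∧
    (∀ σ : V → Fin n, IsProperColoring G σ → (∀ i, σ (r i) = i) → (∀ j, σ (x j) = a j) →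
      ∀ (a' : Fin p → Fin m) (b : Fin q → Fin m),
        (∀ j, (a j : ℕ) = (a' j : ℕ)) → φ a' = some b →
        ∀ k, (σ (y k) : ℕ) = (b k : ℕ))

namespace Simulates

variable {V : Type} {G : SimpleGraph V} {m n p q : ℕ}
  {φ : (Fin p → Fin m) → Option (Fin q → Fin m)} {x : Fin p → V} {y : Fin q → V} {r : Fin n → V}

theorem exists_eq_some_of_isProperColoring (hsim : Simulates G m n φ x y r) {σ : V → Fin n}
    (hσ : IsProperColoring G σ) (hrσ : ∀ i, σ (r i) = i) :
    ∃ a b, (∀ j, (σ (x j) : ℕ) = a j) ∧ φ a = some b ∧ ∀ k, (σ (y k) : ℕ) = b k := by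
  obtain ⟨a, hxa, hdom⟩ := ((hsim.2.2.2 fun j => σ (x j)).1).mp ⟨σ, hσ, hrσ, fun _ => rfl⟩
  obtain ⟨b, hab⟩ := Option.isSome_iff_exists.mp hdom
  exact ⟨a, b, hxa, hab, (hsim.2.2.2 _).2.2 σ hσ hrσ (fun _ => rfl) a b hxa hab⟩

theorem exists_isProperColoring_of_eq_some (hsim : Simulates G m n φ x y r) (hmn : m ≤ n)
    {a : Fin p → Fin m} {b : Fin q → Fin m} (hab : φ a = some b) :
    ∃ σ : V → Fin n, IsProperColoring G σ ∧ (∀ i, σ (r i) = i) ∧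
      (∀ j, (σ (x j) : ℕ) = a j) ∧ ∀ k, (σ (y k) : ℕ) = b k := by
  have hsim_a := hsim.2.2.2 fun j => Fin.castLE hmn (a j)
  obtain ⟨σ, hσ, hrσ, hxσ⟩ := hsim_a.1.mpr ⟨a, fun _ => rfl, by simp [hab]⟩
  exact ⟨σ, hσ, hrσ, fun j => by simp [hxσ j], hsim_a.2.2 σ hσ hrσ hxσ a b (fun _ => rfl) hab⟩

theorem eq_of_forall_input_eq (hsim : Simulates G m n φ x y r) {σ τ : V → Fin n}
    (hσ : IsProperColoring G σ) (hτ : IsProperColoring G τ)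
    (hrσ : ∀ i, σ (r i) = i) (hrτ : ∀ i, τ (r i) = i) (hx : ∀ j, σ (x j) = τ (x j)) :
    σ = τ :=
  (hsim.2.2.2 fun j => σ (x j)).2.1 σ τ hσ hτ hrσ hrτ (fun _ => rfl) fun j => (hx j).symm

theorem input_eq_of_output_eq (hsim : Simulates G m n φ x y r)
    (hinj : ∀ a a' b, φ a = some b → φ a' = some b → a = a') {σ : V → Fin n}
    (hσ : IsProperColoring G σ) (hrσ : ∀ i, σ (r i) = i)
    {a : Fin p → Fin m} {b : Fin q → Fin m} (hab : φ a = some b)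
    (hy : ∀ k, (σ (y k) : ℕ) = b k) : ∀ j, (σ (x j) : ℕ) = a j := by
  obtain ⟨a', b', hxa', ha'b', hyb'⟩ := hsim.exists_eq_some_of_isProperColoring hσ hrσ
  have hb : b' = b := funext fun k => Fin.ext ((hyb' k).symm.trans (hy k))
  rw [hinj a a' b hab (hb ▸ ha'b')]
  exact hxa'

end Simulates

theorem statement4_general {V : Type} (G : SimpleGraph V) (m n p q : ℕ)
    (hn : max m 3 ≤ n)
    (ψ : (Fin p → Fin m) → Option (Fin q → Fin m))
    (ψinv : (Fin q → Fin m) → Option (Fin p → Fin m))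
    (hinj : ∀ a a' b, ψ a = some b → ψ a' = some b → a = a')
    (hinv : ∀ a b, ψ a = some b ↔ ψinv b = some a)
    (x : Fin p → V) (y : Fin q → V) (r : Fin n → V)
    (hsim : Simulates G m n ψ x y r) :
    Simulates G m n ψinv y x r := by
  refine ⟨hsim.1, hsim.2.1, hsim.2.2.1, fun c => ⟨⟨?_, ?_⟩, ?_, ?_⟩⟩
  · rintro ⟨σ, hσ, hrσ, hyc⟩
    obtain ⟨a, b, -, hab, hyb⟩ := hsim.exists_eq_some_of_isProperColoring hσ hrσ
    exact ⟨b, fun k => hyc k ▸ hyb k, by simp [(hinv a b).mp hab]⟩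
  · rintro ⟨b, hcb, hdom⟩
    obtain ⟨a, hba⟩ := Option.isSome_iff_exists.mp hdom
    obtain ⟨σ, hσ, hrσ, -, hyb⟩ := hsim.exists_isProperColoring_of_eq_some
      (le_of_max_le_left hn) ((hinv a b).mpr hba)
    exact ⟨σ, hσ, hrσ, fun k => Fin.ext ((hyb k).trans (hcb k).symm)⟩
  · intro σ τ hσ hτ hrσ hrτ hyσ hyτ
    obtain ⟨a, b, hxa, hab, hyb⟩ := hsim.exists_eq_some_of_isProperColoring hσ hrσ
    have hxτ := hsim.input_eq_of_output_eq hinj hτ hrτ hab fun k => hyτ k ▸ hyσ k ▸ hyb k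
    exact hsim.eq_of_forall_input_eq hσ hτ hrσ hrτ fun j => Fin.ext ((hxa j).trans (hxτ j).symm)
  · intro σ hσ hrσ hyc b a hcb hba
    exact hsim.input_eq_of_output_eq hinj hσ hrσ ((hinv a b).mpr hba) fun k => hyc k ▸ hcb k

/-- If a graph `G` with inputs `x`, outputs `y` and references `r` simulates a one-to-one
partial function `ψ : S^p ⇀ S^q` through `n`-colorings, then the same graph with the two
lists swapped (inputs `y`, outputs `x`) simulates the inverse partial function
`ψ⁻¹ : S^q ⇀ S^p` (defined exactly on the range of `ψ`, with `ψ⁻¹(ψ(a)) = a`). -/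
theorem statement4 {V : Type} [Fintype V] (G : SimpleGraph V) (m n p q : ℕ)
    (hm : 2 ≤ m) (hn : max m 3 ≤ n) (hp : 1 ≤ p) (hq : 1 ≤ q)
    (ψ : (Fin p → Fin m) → Option (Fin q → Fin m))
    (ψinv : (Fin q → Fin m) → Option (Fin p → Fin m))
    (hinj : ∀ a a' b, ψ a = some b → ψ a' = some b → a = a')
    (hinv : ∀ a b, ψ a = some b ↔ ψinv b = some a)
    (x : Fin p → V) (y : Fin q → V) (r : Fin n → V)
    (hsim : Simulates G m n ψ x y r) :
    Simulates G m n ψinv y x r :=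
  statement4_general G m n p q hn ψ ψinv hinj hinv x y r hsim
end

section
/- There is a constant c > 0 such that for all integers m ≥ 2 and n ≥ max(m,3), the cyclic shift functions cs⁺_m : S → S, cs⁺_m(i) = i + 1 (mod m), and cs⁻_m : S → S, cs⁻_m(i) = i − 1 (mod m), can each be simulated through n-colorings by a finite simple graph with at most c·n³ vertices and at most c·n⁴ edges. -/
/-! The simulating graph works for any fixed-point-free map `f : Fin m → Fin m`, in particular
for both cyclic shifts when `m ≥ 2`. Besides the reference clique it has an input and an output
vertex, adjacent to each other and to the references `≥ m`. For every pair of colors `(a, b)` and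
each of the two ports there is a block of `n` copy vertices: the one indexed by `c` sees all
references except `c` and a spare color `z ∉ {a, b}`, so it is colored `c` or `z`; the block
without its `z`-vertex is a clique joined to the port, so exactly the vertex indexed by the port's
color switches to `z`. An edge from the input's `a`-vertex to the output's `b`-vertex in block
`(a, b)` then forbids the pair `(a, b)`, and forbidding every pair with `b ≠ f a` pins the output
to `f` of the input. This uses `2n³ + n + 2` vertices and `O(n⁴)` edges. -/

lemma IsProperColoring.of_rel {V : Type} {r : V → V → Prop} {n : ℕ} {σ : V → Fin n}
    (h : ∀ u v, u ≠ v → r u v → σ u ≠ σ v) : IsProperColoring (SimpleGraph.fromRel r) σ := by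
  rintro u v ⟨huv, huv' | hvu⟩
  · exact h u v huv huv'
  · exact (h v u huv.symm hvu).symm

lemma IsProperColoring.ne_of_rel {V : Type} {r : V → V → Prop} {n : ℕ} {σ : V → Fin n}
    (hσ : IsProperColoring (SimpleGraph.fromRel r) σ) {u v : V} (huv : u ≠ v) (h : r u v) :
    σ u ≠ σ v :=
  hσ ⟨huv, Or.inl h⟩

lemma SimpleGraph.card_edgeSet_le_of_subset_range {V α : Type} [Finite α] {G : SimpleGraph V}
    (e : α → Sym2 V) (h : G.edgeSet ⊆ Set.range e) : Nat.card G.edgeSet ≤ Nat.card α :=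
  (Nat.card_mono (Set.finite_range e) h).trans (Finite.card_range_le e)

lemma Nat.add_mod_ne_self {i k m : ℕ} (hi : i < m) (hk : 0 < k) (hkm : k < m) :
    (i + k) % m ≠ i := by
  rcases Nat.lt_or_ge (i + k) m with h | h
  · rw [Nat.mod_eq_of_lt h]; omega
  · rw [Nat.mod_eq_sub_mod h, Nat.mod_eq_of_lt (by omega)]; omega

namespace UnaryGadget

variable {m n : ℕ}

inductive Vertex (n : ℕ) : Type
  | ref (d : Fin n)
  | port (s : Bool)
  | copy (a b : Fin n) (s : Bool) (c : Fin n)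

open Vertex

def Vertex.equivSum : Vertex n ≃ (Fin n ⊕ Bool) ⊕ (Fin n × Fin n × Bool × Fin n) where
  toFun
    | ref d => .inl (.inl d)
    | port s => .inl (.inr s)
    | copy a b s c => .inr (a, b, s, c)
  invFun
    | .inl (.inl d) => ref d
    | .inl (.inr s) => port s
    | .inr (a, b, s, c) => copy a b s c
  left_inv v := by cases v <;> rfl
  right_inv w := by rcases w with (d | s) | ⟨a, b, s, c⟩ <;> rfl

instance : Fintype (Vertex n) := Fintype.ofEquiv _ Vertex.equivSum.symm

lemma card_vertex_le (hn : 3 ≤ n) : Nat.card (Vertex n) ≤ 8 * n ^ 3 := by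
  rw [Nat.card_congr Vertex.equivSum]
  simp only [Nat.card_eq_fintype_card, Fintype.card_sum, Fintype.card_prod, Fintype.card_fin,
    Fintype.card_bool]
  have h9 : 3 * 3 ≤ n * n := Nat.mul_le_mul hn hn
  nlinarith

/-- A color among `0, 1, 2` other than `a` and `b` when `3 ≤ n`; the `% n` only makes it total. -/
def spare (a b : Fin n) : Fin n :=
  ⟨(if (a : ℕ) ≠ 0 ∧ (b : ℕ) ≠ 0 then 0 else if (a : ℕ) ≠ 1 ∧ (b : ℕ) ≠ 1 then 1 else 2) % n,
    Nat.mod_lt _ a.pos⟩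

lemma spare_ne_left (hn : 3 ≤ n) (a b : Fin n) : spare a b ≠ a := by
  intro h
  have h := congrArg Fin.val h
  simp only [spare] at h
  split_ifs at h <;> rw [Nat.mod_eq_of_lt (by omega)] at h <;> omega

lemma spare_ne_right (hn : 3 ≤ n) (a b : Fin n) : spare a b ≠ b := by
  intro h
  have h := congrArg Fin.val h
  simp only [spare] at h
  split_ifs at h <;> rw [Nat.mod_eq_of_lt (by omega)] at h <;> omega

def IsForbidden (f : Fin m → Fin m) (a b : Fin n) : Prop :=
  a ≠ b ∧ ∀ i : Fin m, (i : ℕ) = a → (f i : ℕ) ≠ b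

/-- `port false` is the input and `port true` the output. -/
def Link (f : Fin m → Fin m) : Vertex n → Vertex n → Prop
  | ref _, ref _ => True
  | port _, ref d => m ≤ d
  | port s, port t => s ≠ t
  | copy a b _ c, ref d => d ≠ c ∧ d ≠ spare a b
  | copy a b s c, port t => s = t ∧ c ≠ spare a b
  | copy a b s c, copy a' b' s' c' =>
      a = a' ∧ b = b' ∧
        (s = s' ∧ c ≠ spare a b ∧ c' ≠ spare a b ∨
          s = false ∧ s' = true ∧ c = a ∧ c' = b ∧ IsForbidden f a b)
  | _, _ => False

def graph (f : Fin m → Fin m) : SimpleGraph (Vertex n) := SimpleGraph.fromRel (Link f)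

def coloring (α β : Fin n) : Vertex n → Fin n
  | ref d => d
  | port s => cond s β α
  | copy a b s c => if c = cond s β α then spare a b else c

def edgeCode : (Fin n ⊕ Bool) × Vertex n ⊕ (Fin n × Fin n) × (Bool × Fin n) × (Bool × Fin n) →
    Sym2 (Vertex n)
  | .inl (.inl d, v) => s(ref d, v)
  | .inl (.inr s, v) => s(port s, v)
  | .inr ((a, b), (s, c), (s', c')) => s(copy a b s c, copy a b s' c')

lemma edgeSet_subset_range_edgeCode (f : Fin m → Fin m) :
    (graph f).edgeSet ⊆ Set.range (edgeCode (n := n)) := by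
  have hlink : ∀ u v : Vertex n, Link f u v → s(u, v) ∈ Set.range (edgeCode (n := n)) := by
    rintro (d | s | ⟨a, b, s, c⟩) (d' | t | ⟨a', b', s', c'⟩) h <;> simp only [Link] at h
    · exact ⟨.inl (.inl d, ref d'), rfl⟩
    · exact ⟨.inl (.inr s, ref d'), rfl⟩
    · exact ⟨.inl (.inr s, port t), rfl⟩
    · exact ⟨.inl (.inl d', copy a b s c), Sym2.eq_swap⟩
    · exact ⟨.inl (.inr t, copy a b s c), Sym2.eq_swap⟩
    · obtain ⟨rfl, rfl, -⟩ := h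
      exact ⟨.inr ((a, b), (s, c), (s', c')), rfl⟩
  intro e he
  induction e using Sym2.ind with
  | _ u v =>
    obtain ⟨-, huv | hvu⟩ := (SimpleGraph.fromRel_adj _ u v).1 he
    · exact hlink u v huv
    · exact Sym2.eq_swap ▸ hlink v u hvu

lemma card_edgeSet_le (hn : 3 ≤ n) (f : Fin m → Fin m) :
    Nat.card (graph (n := n) f).edgeSet ≤ 8 * n ^ 4 := by
  refine (SimpleGraph.card_edgeSet_le_of_subset_range _
    (edgeSet_subset_range_edgeCode f)).trans ?_
  rw [Nat.card_sum, Nat.card_prod, Nat.card_congr Vertex.equivSum]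
  simp only [Nat.card_eq_fintype_card, Fintype.card_sum, Fintype.card_prod, Fintype.card_fin,
    Fintype.card_bool]
  have h9 : 3 * 3 ≤ n * n := Nat.mul_le_mul hn hn
  have h27 : 3 * 3 * 3 ≤ n * n * n := Nat.mul_le_mul h9 hn
  nlinarith

section Colorings

variable {f : Fin m → Fin m}

lemma isProperColoring_coloring (hn : 3 ≤ n) (hmn : m ≤ n) (hf : ∀ i, f i ≠ i) (i : Fin m) :
    IsProperColoring (graph f) (coloring (i.castLE hmn) ((f i).castLE hmn)) := by
  apply IsProperColoring.of_rel
  rintro (d | s | ⟨a, b, s, c⟩) (d' | t | ⟨a', b', s', c'⟩) hne h <;> simp only [Link] at h <;>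
    simp only [coloring]
  · exact fun e => hne (e ▸ rfl)
  · intro e
    have := congrArg Fin.val e
    cases s <;> simp only [cond_false, cond_true, Fin.val_castLE] at this <;> omega
  · have hαβ : i.castLE hmn ≠ (f i).castLE hmn := fun e => hf i (Fin.castLE_injective hmn e).symm
    cases s <;> cases t <;> simp_all [eq_comm]
  · split_ifs
    · exact fun e => h.2 e.symm
    · exact fun e => h.1 e.symm
  · obtain ⟨rfl, hc⟩ := h
    split_ifs with hcu
    · exact fun e => hc (hcu.trans e.symm)
    · exact hcu
  · obtain ⟨rfl, rfl, ⟨rfl, hc, hc'⟩ | ⟨rfl, rfl, rfl, rfl, hab, hforb⟩⟩ := h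
    · have hcc' : c ≠ c' := fun e => hne (e ▸ rfl)
      split_ifs with h h' h'
      · exact absurd (h.trans h'.symm) hcc'
      · exact fun e => hc' e.symm
      · exact hc
      · exact hcc'
    · simp only [cond_false, cond_true]
      split_ifs with h h'
      · exact absurd (congrArg Fin.val h'.symm) (hforb i (congrArg Fin.val h).symm)
      · exact (spare_ne_right hn _ _).symm ∘ Eq.symm
      · exact (spare_ne_left hn _ _).symm
      · exact hab

variable {σ : Vertex n → Fin n} (hσ : IsProperColoring (graph f) σ) (hr : ∀ d, σ (ref d) = d)
include hσ hr

lemma apply_copy (a b : Fin n) (s : Bool) (c : Fin n) :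
    σ (copy a b s c) = if c = σ (port s) then spare a b else c := by
  have mem : ∀ c, σ (copy a b s c) = c ∨ σ (copy a b s c) = spare a b := by
    intro c
    by_contra! h
    exact hσ.ne_of_rel (u := copy a b s c) (v := ref (σ (copy a b s c))) (by simp) ⟨h.1, h.2⟩
      (hr _).symm
  have ne_port : ∀ c, c ≠ spare a b → σ (copy a b s c) ≠ σ (port s) :=
    fun c hc => hσ.ne_of_rel (by simp) ⟨rfl, hc⟩
  have at_port : ∀ c, c = σ (port s) → c ≠ spare a b → σ (copy a b s c) = spare a b :=
    fun c hcu hc => (mem c).resolve_left fun h => ne_port c hc (h.trans hcu)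
  by_cases hc : c = spare a b
  · subst hc
    rw [ite_self]
    exact (mem _).elim id id
  split_ifs with hcu
  · exact at_port c hcu hc
  refine (mem c).resolve_right fun hz => ?_
  by_cases hu : σ (port s) = spare a b
  · exact ne_port c hc (hz.trans hu.symm)
  · exact hσ.ne_of_rel (u := copy a b s c) (v := copy a b s (σ (port s))) (by simpa using hcu)
      ⟨rfl, rfl, Or.inl ⟨rfl, hc, hu⟩⟩ (hz.trans (at_port _ rfl hu).symm)

lemma val_apply_port_lt (s : Bool) : (σ (port s) : ℕ) < m := by
  by_contra! h
  exact hσ.ne_of_rel (u := port s) (v := ref (σ (port s))) (by simp) h (hr _).symm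

lemma val_apply_port_true :
    (σ (port true) : ℕ) = f ⟨σ (port false), val_apply_port_lt hσ hr false⟩ := by
  by_contra h
  set α := σ (port false)
  set β := σ (port true)
  have hαβ : α ≠ β := hσ.ne_of_rel (by simp) Bool.false_ne_true
  have hforb : IsForbidden f α β := ⟨hαβ, fun i hi e => h (by rw [← e]; congr; exact Fin.ext hi)⟩
  have hα : σ (copy α β false α) = spare α β := by rw [apply_copy hσ hr, if_pos rfl]
  have hβ : σ (copy α β true β) = spare α β := by rw [apply_copy hσ hr, if_pos rfl]
  exact hσ.ne_of_rel (u := copy α β false α) (v := copy α β true β) (by simp)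
    ⟨rfl, rfl, Or.inr ⟨rfl, rfl, rfl, rfl, hforb⟩⟩ (hα.trans hβ.symm)

lemma eq_coloring : σ = coloring (σ (port false)) (σ (port true)) := by
  funext v
  rcases v with d | s | ⟨a, b, s, c⟩
  · exact hr d
  · cases s <;> rfl
  · rw [apply_copy hσ hr]
    cases s <;> rfl

lemma exists_eq_coloring (hmn : m ≤ n) :
    ∃ i : Fin m, σ = coloring (i.castLE hmn) ((f i).castLE hmn) := by
  refine ⟨⟨σ (port false), val_apply_port_lt hσ hr false⟩, ?_⟩
  refine (eq_coloring hσ hr).trans ?_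
  congr
  exact Fin.ext (val_apply_port_true hσ hr)

end Colorings

theorem simulates_graph (hn : 3 ≤ n) (hmn : m ≤ n) (hm : 0 < m) {f : Fin m → Fin m}
    (hf : ∀ i, f i ≠ i) :
    Simulates (graph f) m n (fun a : Fin 1 → Fin m => some fun _ : Fin 1 => f (a 0))
      (fun _ => port false) (fun _ => port true) ref := by
  refine ⟨fun _ _ => Vertex.ref.inj, ⟨_, isProperColoring_coloring hn hmn hf ⟨0, hm⟩⟩,
    fun σ hσ d d' h => ?_, fun a => ⟨⟨?_, ?_⟩, ?_, ?_⟩⟩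
  · by_contra hdd
    exact hσ.ne_of_rel (u := ref d) (v := ref d') (by simpa using hdd) trivial h
  · rintro ⟨σ, hσ, hr, hx⟩
    obtain ⟨i, rfl⟩ := exists_eq_coloring hσ hr hmn
    exact ⟨fun _ => i, fun j => by rw [← hx j]; rfl, rfl⟩
  · rintro ⟨a', ha', -⟩
    refine ⟨_, isProperColoring_coloring hn hmn hf (a' 0), fun _ => rfl, fun j => ?_⟩
    obtain rfl := Subsingleton.elim j 0
    exact Fin.ext (ha' 0).symm
  · intro σ τ hσ hτ hrσ hrτ hxσ hxτ
    obtain ⟨i, rfl⟩ := exists_eq_coloring hσ hrσ hmn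
    obtain ⟨i', rfl⟩ := exists_eq_coloring hτ hrτ hmn
    obtain rfl : i = i' := Fin.castLE_injective hmn ((hxσ 0).trans (hxτ 0).symm)
    rfl
  · intro σ hσ hr hx a' b ha' hb k
    obtain ⟨i, rfl⟩ := exists_eq_coloring hσ hr hmn
    obtain rfl := (Option.some_injective _ hb).symm
    obtain rfl : i = a' 0 := Fin.ext ((congrArg Fin.val (hx 0)).trans (ha' 0))
    rfl

theorem exists_simulates (hn : 3 ≤ n) (hmn : m ≤ n) (hm : 0 < m) {f : Fin m → Fin m}
    (hf : ∀ i, f i ≠ i) :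
    ∃ (V : Type) (_ : Fintype V) (G : SimpleGraph V) (x y : Fin 1 → V) (r : Fin n → V),
      Simulates G m n (fun a : Fin 1 → Fin m => some fun _ : Fin 1 => f (a 0)) x y r ∧
        Nat.card V ≤ 8 * n ^ 3 ∧ Nat.card G.edgeSet ≤ 8 * n ^ 4 :=
  ⟨Vertex n, inferInstance, graph f, _, _, _, simulates_graph hn hmn hm hf, card_vertex_le hn,
    card_edgeSet_le hn f⟩

end UnaryGadget

/-- There is a constant `c > 0` such that for all `m ≥ 2` and `n ≥ max(m,3)`, the cyclic
shift functions `cs⁺_m(i) = i + 1 (mod m)` and `cs⁻_m(i) = i − 1 (mod m)` on `S` can each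
be simulated through `n`-colorings by a finite simple graph with at most `c·n³` vertices
and `c·n⁴` edges. -/
theorem statement5 :
    ∃ c : ℕ, 0 < c ∧
      ∀ m n : ℕ, (hm : 2 ≤ m) → max m 3 ≤ n →
        (∃ (V : Type) (_ : Fintype V) (G : SimpleGraph V)
            (x y : Fin 1 → V) (r : Fin n → V),
          Simulates G m n
            (fun a : Fin 1 → Fin m => some fun _ : Fin 1 =>
              (⟨((a 0 : ℕ) + 1) % m, Nat.mod_lt _ (by omega)⟩ : Fin m)) x y r ∧
          Nat.card V ≤ c * n ^ 3 ∧ Nat.card G.edgeSet ≤ c * n ^ 4) ∧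
        (∃ (V : Type) (_ : Fintype V) (G : SimpleGraph V)
            (x y : Fin 1 → V) (r : Fin n → V),
          Simulates G m n
            (fun a : Fin 1 → Fin m => some fun _ : Fin 1 =>
              (⟨((a 0 : ℕ) + (m - 1)) % m, Nat.mod_lt _ (by omega)⟩ : Fin m)) x y r ∧
          Nat.card V ≤ c * n ^ 3 ∧ Nat.card G.edgeSet ≤ c * n ^ 4) := by
  refine ⟨8, by norm_num, fun m n hm2 hmax => ?_⟩
  have hn : 3 ≤ n := (le_max_right m 3).trans hmax
  have hmn : m ≤ n := (le_max_left m 3).trans hmax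
  have hm : 0 < m := by omega
  exact ⟨UnaryGadget.exists_simulates hn hmn hm (f := fun i => ⟨(i + 1) % m, Nat.mod_lt _ hm⟩)
      fun i h => Nat.add_mod_ne_self i.2 one_pos hm2 (congrArg Fin.val h),
    UnaryGadget.exists_simulates hn hmn hm (f := fun i => ⟨(i + (m - 1)) % m, Nat.mod_lt _ hm⟩)
      fun i h => Nat.add_mod_ne_self i.2 (by omega) (by omega) (congrArg Fin.val h)⟩
end

section
/- There is a constant c > 0 such that for all integers m ≥ 2 and n ≥ max(m,3): the partial functions and_m : S² ⇀ S and or_m : S² ⇀ S, defined exactly on pairs (x,y) with x,y ∈ {0,1} by and_m(x,y) = x ∧ y and or_m(x,y) = x ∨ y, can each be simulated through n-colorings by a graph with at most c·n² vertices and at most c·n³ edges; and the partial function not_m : S ⇀ S, defined exactly on x ∈ {0,1} by not_m(x) = 1 − x, can be simulated through n-colorings by a graph with at most c·n vertices and at most c·n² edges. -/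
/-!
Join the reference vertices into a clique and attach a constant-size gadget `H` in which each
vertex `v` carries a palette `L v ⊆ {0, 1, 2}` and is joined to every reference vertex `r_i`
with `i ∉ L v`. Once the reference vertices are colored by the identity, the proper
`n`-colorings are exactly the list colorings of `H` from `L`. So it suffices to find gadgets
whose list colorings are determined by their (Boolean) inputs and carry the value of `and`,
`or`, resp. `not` on an output vertex; such gadgets on six, resp. two, vertices are checked by
exhaustive search. The resulting graphs have `n + O(1)` vertices, hence `O(n²)` edges.
-/

variable {W : Type} {k n m p q : ℕ}

def IsListColoring (H : SimpleGraph W) (L : W → Finset (Fin k)) (c : W → Fin k) : Prop :=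
  (∀ v, c v ∈ L v) ∧ ∀ ⦃u v⦄, H.Adj u v → c u ≠ c v

instance [Fintype W] (H : SimpleGraph W) [DecidableRel H.Adj] (L : W → Finset (Fin k))
    (c : W → Fin k) : Decidable (IsListColoring H L c) := by
  unfold IsListColoring; infer_instance

def paletteGraph (n : ℕ) (H : SimpleGraph W) (L : W → Finset (Fin k)) :
    SimpleGraph (Fin n ⊕ W) where
  Adj
    | .inl i, .inl j => i ≠ j
    | .inl i, .inr v | .inr v, .inl i => ∀ x ∈ L v, (x : ℕ) ≠ i
    | .inr u, .inr v => H.Adj u v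
  symm := by
    constructor
    rintro (i | u) (j | v) h
    exacts [Ne.symm h, h, h, h.symm]
  loopless := by
    constructor
    rintro (i | u) h
    exacts [h rfl, H.loopless.irrefl u h]

def liftColoring (hk : k ≤ n) (c : W → Fin k) : Fin n ⊕ W → Fin n :=
  Sum.elim id fun v => Fin.castLE hk (c v)

section paletteGraph

variable {H : SimpleGraph W} {L : W → Finset (Fin k)}

theorem isProperColoring_liftColoring_iff (hk : k ≤ n) {c : W → Fin k} :
    IsProperColoring (paletteGraph n H L) (liftColoring hk c) ↔ IsListColoring H L c := by
  constructor
  · intro hσ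
    refine ⟨fun v => ?_, fun u v huv heq =>
      hσ (u := .inr u) (v := .inr v) huv (congrArg (Fin.castLE hk) heq)⟩
    by_contra hv
    refine hσ (u := .inl (Fin.castLE hk (c v))) (v := .inr v) (fun x hx hxv => hv ?_) rfl
    rwa [show c v = x from Fin.ext hxv.symm]
  · rintro ⟨hL, hH⟩ (i | u) (j | v) h heq
    · exact h heq
    · exact h (c v) (hL v) (congrArg Fin.val heq).symm
    · exact h (c u) (hL u) (congrArg Fin.val heq)
    · exact hH h (Fin.castLE_injective hk heq)

theorem exists_eq_liftColoring (hk : k ≤ n) {σ : Fin n ⊕ W → Fin n}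
    (hσ : IsProperColoring (paletteGraph n H L) σ) (hr : ∀ i, σ (.inl i) = i) :
    ∃ c : W → Fin k, σ = liftColoring hk c := by
  have hpal : ∀ v, ∃ x ∈ L v, (x : ℕ) = σ (.inr v) := by
    intro v
    by_contra! hv
    exact hσ (u := .inl (σ (.inr v))) (v := .inr v) hv (hr _)
  choose c _ hc using hpal
  refine ⟨c, funext ?_⟩
  rintro (i | v)
  exacts [hr i, Fin.ext (hc v).symm]

theorem isProperColoring_paletteGraph_iff (hk : k ≤ n) {σ : Fin n ⊕ W → Fin n}
    (hr : ∀ i, σ (.inl i) = i) :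
    IsProperColoring (paletteGraph n H L) σ ↔
      ∃ c, IsListColoring H L c ∧ σ = liftColoring hk c := by
  constructor
  · intro hσ
    obtain ⟨c, rfl⟩ := exists_eq_liftColoring hk hσ hr
    exact ⟨c, (isProperColoring_liftColoring_iff hk).1 hσ, rfl⟩
  · rintro ⟨c, hc, rfl⟩
    exact (isProperColoring_liftColoring_iff hk).2 hc

theorem injective_reference_of_isProperColoring {σ : Fin n ⊕ W → Fin n}
    (hσ : IsProperColoring (paletteGraph n H L) σ) : Function.Injective fun i => σ (.inl i) := by
  intro i j hij
  by_contra hne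
  exact hσ (u := .inl i) (v := .inl j) hne hij

end paletteGraph

def ListColoringComputes (H : SimpleGraph W) (L : W → Finset (Fin k)) (ι : Fin p → W)
    (ο : Fin q → W) (f : (Fin p → Fin 2) → Fin q → Fin 2) : Prop :=
  (∀ c, IsListColoring H L c →
    ∃ b : Fin p → Fin 2, (∀ j, (c (ι j) : ℕ) = b j) ∧
      ∀ l, (c (ο l) : ℕ) = f b l) ∧
  ∀ b : Fin p → Fin 2, ∃! c, IsListColoring H L c ∧ ∀ j, (c (ι j) : ℕ) = b j

def IsBoolExtension (φ : (Fin p → Fin m) → Option (Fin q → Fin m))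
    (f : (Fin p → Fin 2) → Fin q → Fin 2) : Prop :=
  (∀ a, (φ a).isSome ↔ ∀ j, (a j : ℕ) ≤ 1) ∧
  ∀ a b (bv : Fin p → Fin 2), (∀ j, (a j : ℕ) = bv j) → φ a = some b →
    ∀ l, (b l : ℕ) = f bv l

theorem isBoolExtension_ite {P : (Fin p → Fin m) → Prop} [DecidablePred P]
    {g : (Fin p → Fin m) → Fin q → Fin m} {f : (Fin p → Fin 2) → Fin q → Fin 2}
    (hP : ∀ a, P a ↔ ∀ j, (a j : ℕ) ≤ 1)
    (hg : ∀ a bv, (∀ j, (a j : ℕ) = bv j) → ∀ l, (g a l : ℕ) = f bv l) :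
    IsBoolExtension (fun a => if P a then some (g a) else none) f := by
  refine ⟨fun a => ?_, fun a b bv hbv hb => ?_⟩
  · rw [← hP]
    by_cases h : P a <;> simp [h]
  · dsimp only at hb
    split_ifs at hb
    cases hb
    exact hg a bv hbv

namespace ListColoringComputes

variable {H : SimpleGraph W} {L : W → Finset (Fin k)} {ι : Fin p → W} {ο : Fin q → W}
  {f : (Fin p → Fin 2) → Fin q → Fin 2}

open Finset in
theorem of_card_eq_one [Fintype W] [DecidableEq W] [DecidableRel H.Adj]
    (hval : ∀ c, IsListColoring H L c →
      ∃ b : Fin p → Fin 2, (∀ j, (c (ι j) : ℕ) = b j) ∧ ∀ l, (c (ο l) : ℕ) = f b l)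
    (hcard : ∀ b : Fin p → Fin 2,
      #{c | IsListColoring H L c ∧ ∀ j, (c (ι j) : ℕ) = b j} = 1) :
    ListColoringComputes H L ι ο f :=
  ⟨hval, fun b => (Fintype.existsUnique_iff_card_one _).2 (hcard b)⟩

variable (hH : ListColoringComputes H L ι ο f) (hk : k ≤ n) {σ τ : Fin n ⊕ W → Fin n}
include hH hk

theorem exists_bits (hσ : IsProperColoring (paletteGraph n H L) σ)
    (hr : ∀ i, σ (.inl i) = i) :
    ∃ b : Fin p → Fin 2, (∀ j, (σ (.inr (ι j)) : ℕ) = b j) ∧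
      ∀ l, (σ (.inr (ο l)) : ℕ) = f b l := by
  obtain ⟨c, hc, rfl⟩ := (isProperColoring_paletteGraph_iff hk hr).1 hσ
  exact hH.1 c hc

theorem eq_of_inputs (hσ : IsProperColoring (paletteGraph n H L) σ)
    (hτ : IsProperColoring (paletteGraph n H L) τ) (hrσ : ∀ i, σ (.inl i) = i)
    (hrτ : ∀ i, τ (.inl i) = i) (hin : ∀ j, σ (.inr (ι j)) = τ (.inr (ι j))) :
    σ = τ := by
  obtain ⟨c, hc, rfl⟩ := (isProperColoring_paletteGraph_iff hk hrσ).1 hσ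
  obtain ⟨d, hd, rfl⟩ := (isProperColoring_paletteGraph_iff hk hrτ).1 hτ
  obtain ⟨b, hb, -⟩ := hH.1 c hc
  have hdb : ∀ j, (d (ι j) : ℕ) = b j := fun j => (congrArg Fin.val (hin j)).symm.trans (hb j)
  rw [(hH.2 b).unique ⟨hc, hb⟩ ⟨hd, hdb⟩]

theorem exists_coloring (b : Fin p → Fin 2) :
    ∃ σ, IsProperColoring (paletteGraph n H L) σ ∧ (∀ i, σ (.inl i) = i) ∧
      ∀ j, (σ (.inr (ι j)) : ℕ) = b j := by
  obtain ⟨c, ⟨hc, hb⟩, -⟩ := hH.2 b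
  exact ⟨liftColoring hk c, (isProperColoring_liftColoring_iff hk).2 hc, fun _ => rfl, hb⟩

theorem simulates (hm : 2 ≤ m) {φ : (Fin p → Fin m) → Option (Fin q → Fin m)}
    (hφ : IsBoolExtension φ f) :
    Simulates (paletteGraph n H L) m n φ (Sum.inr ∘ ι) (Sum.inr ∘ ο) Sum.inl := by
  refine ⟨Sum.inl_injective, ?_, fun σ hσ => injective_reference_of_isProperColoring hσ,
    fun a => ⟨⟨?_, ?_⟩, ?_, ?_⟩⟩
  · obtain ⟨σ, hσ, -⟩ := hH.exists_coloring hk 0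
    exact ⟨σ, hσ⟩
  · rintro ⟨σ, hσ, hr, ha⟩
    obtain ⟨b, hb, -⟩ := hH.exists_bits hk hσ hr
    refine ⟨fun j => Fin.castLE hm (b j), fun j => (congrArg Fin.val (ha j)).symm.trans (hb j),
      (hφ.1 _).2 fun j => ?_⟩
    simpa using Nat.lt_succ_iff.1 (b j).isLt
  · rintro ⟨a', ha', hsome⟩
    have hle := (hφ.1 a').1 hsome
    obtain ⟨σ, hσ, hr, hb⟩ :=
      hH.exists_coloring hk fun j => ⟨a' j, Nat.lt_succ_of_le (hle j)⟩
    exact ⟨σ, hσ, hr, fun j => Fin.ext ((hb j).trans (ha' j).symm)⟩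
  · intro σ τ hσ hτ hrσ hrτ hσa hτa
    exact hH.eq_of_inputs hk hσ hτ hrσ hrτ fun j => (hσa j).trans (hτa j).symm
  · intro σ hσ hr ha a' b ha' hφb l
    obtain ⟨bv, hbv, hout⟩ := hH.exists_bits hk hσ hr
    refine (hout l).trans (hφ.2 a' b bv (fun j => ?_) hφb l).symm
    rw [← ha', ← hbv, ← ha j]
    rfl

end ListColoringComputes

theorem SimpleGraph.natCard_edgeSet_le_sq {V : Type*} [Fintype V] (G : SimpleGraph V) :
    Nat.card G.edgeSet ≤ Fintype.card V ^ 2 := by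
  classical
  rw [Nat.card_eq_fintype_card, ← G.edgeFinset_card]
  exact G.card_edgeFinset_le_card_choose_two.trans ((Nat.choose_le_pow _ _).trans (by simp))

-- With inputs `x, y` at `0, 1` and output at `2`: if `x = 0`, vertices `3, 4` are forced to
-- `2, 1` and the output to `0`; if `x = 1`, vertex `4` is forced to `2`, and then vertex `5`,
-- avoiding `y` and the output, forces the output to equal `y`.
def andGraph : SimpleGraph (Fin 6) :=
  .fromRel fun u v => (u, v) ∈ [(0, 3), (0, 4), (1, 5), (2, 4), (2, 5), (3, 4), (4, 5)]

instance : DecidableRel andGraph.Adj := by unfold andGraph; infer_instance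

def andPalette : Fin 6 → Finset (Fin 3) := ![{0, 1}, {0, 1}, {0, 1}, {0, 2}, {1, 2}, {0, 1, 2}]

-- The `and` palettes with the colors `0` and `1` exchanged (de Morgan).
def orPalette : Fin 6 → Finset (Fin 3) := ![{0, 1}, {0, 1}, {0, 1}, {1, 2}, {0, 2}, {0, 1, 2}]

set_option maxRecDepth 10000 in
theorem listColoringComputes_and :
    ListColoringComputes andGraph andPalette ![0, 1] ![2] fun b => ![min (b 0) (b 1)] :=
  .of_card_eq_one (by decide) (by decide)

set_option maxRecDepth 10000 in
theorem listColoringComputes_or :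
    ListColoringComputes andGraph orPalette ![0, 1] ![2] fun b => ![max (b 0) (b 1)] :=
  .of_card_eq_one (by decide) (by decide)

theorem listColoringComputes_not :
    ListColoringComputes (⊤ : SimpleGraph (Fin 2)) (fun _ => ({0, 1} : Finset (Fin 3)))
      ![0] ![1] fun b => ![(b 0).rev] :=
  .of_card_eq_one (by decide) (by decide)

/-- There is a constant `c > 0` such that for all `m ≥ 2` and `n ≥ max(m,3)`: the partial
functions `and_m, or_m : S² ⇀ S` (defined exactly on pairs from `{0,1}`, with values
`x ∧ y = min x y` and `x ∨ y = max x y`) can each be simulated through `n`-colorings by a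
graph with at most `c·n²` vertices and `c·n³` edges, and `not_m : S ⇀ S` (defined exactly
on `{0,1}`, with value `1 − x`) by a graph with at most `c·n` vertices and `c·n²` edges. -/
theorem statement7 :
    ∃ c : ℕ, 0 < c ∧
      ∀ m n : ℕ, (hm : 2 ≤ m) → max m 3 ≤ n →
        -- and_m
        (∃ (V : Type) (_ : Fintype V) (G : SimpleGraph V)
            (x : Fin 2 → V) (y : Fin 1 → V) (r : Fin n → V),
          Simulates G m n
            (fun a : Fin 2 → Fin m =>
              if (a 0 : ℕ) ≤ 1 ∧ (a 1 : ℕ) ≤ 1 then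
                some fun _ : Fin 1 =>
                  (⟨min (a 0 : ℕ) (a 1 : ℕ),
                    lt_of_le_of_lt (Nat.min_le_left _ _) (a 0).isLt⟩ : Fin m)
              else none)
            x y r ∧
          Nat.card V ≤ c * n ^ 2 ∧ Nat.card G.edgeSet ≤ c * n ^ 3) ∧
        -- or_m
        (∃ (V : Type) (_ : Fintype V) (G : SimpleGraph V)
            (x : Fin 2 → V) (y : Fin 1 → V) (r : Fin n → V),
          Simulates G m n
            (fun a : Fin 2 → Fin m =>
              if (a 0 : ℕ) ≤ 1 ∧ (a 1 : ℕ) ≤ 1 then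
                some fun _ : Fin 1 =>
                  (⟨max (a 0 : ℕ) (a 1 : ℕ), max_lt (a 0).isLt (a 1).isLt⟩ : Fin m)
              else none)
            x y r ∧
          Nat.card V ≤ c * n ^ 2 ∧ Nat.card G.edgeSet ≤ c * n ^ 3) ∧
        -- not_m
        (∃ (V : Type) (_ : Fintype V) (G : SimpleGraph V)
            (x : Fin 1 → V) (y : Fin 1 → V) (r : Fin n → V),
          Simulates G m n
            (fun a : Fin 1 → Fin m =>
              if (a 0 : ℕ) ≤ 1 then
                some fun _ : Fin 1 => (⟨1 - (a 0 : ℕ), by omega⟩ : Fin m)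
              else none)
            x y r ∧
          Nat.card V ≤ c * n ∧ Nat.card G.edgeSet ≤ c * n ^ 2) := by
  refine ⟨9, by norm_num, fun m n hm hn => ?_⟩
  have hn3 : 3 ≤ n := le_of_max_le_right hn
  have hn23 : n ^ 2 ≤ n ^ 3 := Nat.pow_le_pow_right (by omega) (by norm_num)
  refine ⟨⟨_, inferInstance, paletteGraph n andGraph andPalette, _, _, _,
      listColoringComputes_and.simulates hn3 hm (isBoolExtension_ite ?_ ?_), ?_, ?_⟩,
    ⟨_, inferInstance, paletteGraph n andGraph orPalette, _, _, _,
      listColoringComputes_or.simulates hn3 hm (isBoolExtension_ite ?_ ?_), ?_, ?_⟩,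
    ⟨_, inferInstance, paletteGraph n ⊤ _, _, _, _,
      listColoringComputes_not.simulates hn3 hm (isBoolExtension_ite ?_ ?_), ?_, ?_⟩⟩
  · simp [Fin.forall_fin_two]
  · intro a bv h l; simp [h, Fin.coe_min]
  · simp; nlinarith
  · exact (SimpleGraph.natCard_edgeSet_le_sq _).trans (by simp; nlinarith)
  · simp [Fin.forall_fin_two]
  · intro a bv h l; simp [h, Fin.coe_max]
  · simp; nlinarith
  · exact (SimpleGraph.natCard_edgeSet_le_sq _).trans (by simp; nlinarith)
  · simp
  · intro a bv h l; simp [h]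
  · simp; nlinarith
  · exact (SimpleGraph.natCard_edgeSet_le_sq _).trans (by simp; nlinarith)
end

section
/- Let p, q ≥ 1 be integers, let S = {0,1,...,m−1} with m ≥ 2, let φ : S^p ⇀ S^q be a partial function, let S̃ = {0,1,...,m̃−1} with S ⊆ S̃ (so m̃ ≥ m), and let r > q be an integer satisfying m^p ≤ m̃^{r−q} (equivalently, p·log m ≤ (r−q)·log m̃). Then for every s₀ ∈ S there exists a bijection φ̃ : S̃^r → S̃^r such that for every x ∈ dom(φ), the first q coordinates of φ̃(x, s₀, s₀, ..., s₀) (where the input x ∈ S^p is padded with r − p copies of s₀) equal φ(x); that is, φ̃(x, s₀,...,s₀) = (φ(x), y_x) for some y_x ∈ S̃^{r−q}. -/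
/-!
Pad each `x ∈ S^p` with `s₀` to a point of `S̃^r`, and send it to the point whose first `q`
coordinates are `φ(x)` (with `φ` extended arbitrarily off its domain) and whose last `r - q`
coordinates are an injective code of `x`; such a code exists because `m^p ≤ m̃^(r-q)`. Both maps
are injective on the finite set `S^p`, so some permutation of `S̃^r` carries the first onto the
second.
-/

namespace Fin

variable {A B β : Type*}

def padEmbedding {p r : ℕ} (hpr : p ≤ r) (e : B ↪ A) (a₀ : A) : (Fin p → B) ↪ (Fin r → A) where
  toFun x i := if h : (i : ℕ) < p then e (x ⟨i, h⟩) else a₀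
  inj' x y hxy := funext fun i => e.injective <| by
    simpa using congrFun hxy (Fin.castLE hpr i)

def prefixEmbedding {q r : ℕ} (hqr : q ≤ r) (v : β → Fin q → A)
    (w : β ↪ (Fin (r - q) → A)) : β ↪ (Fin r → A) where
  toFun b := Fin.append (v b) (w b) ∘ Fin.cast (by omega)
  inj' b c hbc := w.injective <| funext fun k => by
    have hk := congrFun hbc (Fin.cast (by omega) (Fin.natAdd q k))
    simp only [Function.comp_apply, Fin.cast_cast] at hk
    simpa using hk

theorem prefixEmbedding_apply_castLE {q r : ℕ} (hqr : q ≤ r) (v : β → Fin q → A)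
    (w : β ↪ (Fin (r - q) → A)) (b : β) (j : Fin q) :
    prefixEmbedding hqr v w b (Fin.castLE hqr j) = v b j := by
  change Fin.append (v b) (w b) (Fin.cast _ (Fin.castLE hqr j)) = v b j
  exact Fin.append_left (v b) (w b) j

end Fin

theorem statement14_general (p q m mt r : ℕ)
    (hmmt : m ≤ mt) (hqr : q < r) (hpr : p ≤ r)
    (hsize : m ^ p ≤ mt ^ (r - q))
    (φ : (Fin p → Fin m) → Option (Fin q → Fin m)) (s₀ : Fin m) :
    ∃ φt : (Fin r → Fin mt) → (Fin r → Fin mt),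
      Function.Bijective φt ∧
      ∀ (x : Fin p → Fin m) (b : Fin q → Fin m), φ x = some b →
        ∀ j : Fin q,
          φt (fun i : Fin r =>
              if h : (i : ℕ) < p then Fin.castLE hmmt (x ⟨(i : ℕ), h⟩)
              else Fin.castLE hmmt s₀)
            (Fin.castLE hqr.le j) = Fin.castLE hmmt (b j) := by
  obtain ⟨code⟩ : Nonempty ((Fin p → Fin m) ↪ (Fin (r - q) → Fin mt)) :=
    Function.Embedding.nonempty_of_card_le (by simpa using hsize)
  let pad := Fin.padEmbedding hpr (Fin.castLEEmb hmmt) (Fin.castLE hmmt s₀)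
  let target := Fin.prefixEmbedding hqr.le
    (fun x => Fin.castLE hmmt ∘ (φ x).getD fun _ => s₀) code
  obtain ⟨σ, hσ⟩ := Equiv.Perm.exists_extending_pair pad target pad.injective target.injective
  refine ⟨σ, σ.bijective, fun x b hb j => ?_⟩
  change σ (pad x) _ = _
  simp [hσ, target, Fin.prefixEmbedding_apply_castLE, hb]

/-- Extension lemma (via Hall's SDR theorem): given a partial function `φ : S^p ⇀ S^q`
with `S = {0,…,m−1} ⊆ S̃ = {0,…,m̃−1}`, and `r > q` with `m^p ≤ m̃^(r−q)` (and `p ≤ r`, so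
that padding makes sense), for every `s₀ ∈ S` there is a bijection `φ̃ : S̃^r → S̃^r` such
that for every `x` in the domain of `φ`, the first `q` coordinates of
`φ̃(x, s₀, …, s₀)` equal `φ(x)`. -/
theorem statement14 (p q m mt r : ℕ) (hp : 1 ≤ p) (hq : 1 ≤ q) (hm : 2 ≤ m)
    (hmmt : m ≤ mt) (hqr : q < r) (hpr : p ≤ r)
    (hsize : m ^ p ≤ mt ^ (r - q))
    (φ : (Fin p → Fin m) → Option (Fin q → Fin m)) (s₀ : Fin m) :
    ∃ φt : (Fin r → Fin mt) → (Fin r → Fin mt),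
      Function.Bijective φt ∧
      ∀ (x : Fin p → Fin m) (b : Fin q → Fin m), φ x = some b →
        ∀ j : Fin q,
          φt (fun i : Fin r =>
              if h : (i : ℕ) < p then Fin.castLE hmmt (x ⟨(i : ℕ), h⟩)
              else Fin.castLE hmmt s₀)
            (Fin.castLE hqr.le j) = Fin.castLE hmmt (b j) :=
  statement14_general p q m mt r hmmt hqr hpr hsize φ s₀
end

section
/- Fix a finite simple graph G on vertex set V and an integer t ≥ 1. The reduction relation ⇒ on list assignments L = (L_v)_{v∈V}, L_v ⊆ {1,...,t}, defined by the direct forcing rules, is terminating (there is no infinite chain L₁ ⇒ L₂ ⇒ L₃ ⇒ ⋯) and confluent (whenever L ⇒* L₁ and L ⇒* L₂, there exists a list assignment L' with L₁ ⇒* L' and L₂ ⇒* L', where ⇒* denotes the reflexive-transitive closure of ⇒). -/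
/-- The direct forcing rule `R_{(u,v)}` on list assignments `L : V → Finset (Fin t)`:
the list of `v` becomes `L v \ L u` if `|L u| = 1`, becomes `∅` if `L u = ∅`, and is
unchanged otherwise; all other lists are unchanged. -/
def forceRule {V : Type} [DecidableEq V] (t : ℕ) (u v : V)
    (L : V → Finset (Fin t)) : V → Finset (Fin t) := fun z =>
  if z = v then
    if (L u).card = 1 then L v \ L u
    else if L u = ∅ then (∅ : Finset (Fin t))
    else L v
  else L z

/-- The reduction relation `⇒` on list assignments: `L ⇒ L'` iff `L' ≠ L` and `L'` is
obtained from `L` by applying the direct forcing rule on some oriented edge of `G`. -/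
def Reduces {V : Type} [DecidableEq V] (G : SimpleGraph V) (t : ℕ)
    (L L' : V → Finset (Fin t)) : Prop :=
  L' ≠ L ∧ ∃ u v : V, G.Adj u v ∧ L' = forceRule t u v L

/-!
Order list assignments by pointwise inclusion. Every forcing rule is deflationary, so a proper
reduction strictly decreases the assignment, and the order is finite: this gives termination.
Every forcing rule is also monotone. Hence a normal form `P ≤ L` is a common fixed point of the
rules and stays below every reduct of `L`. Two normal forms reached from `L` are therefore
below each other, so each `L` has a unique normal form, which gives confluence.
-/

open Relation

section Abstract

variable {α : Type*} [PartialOrder α] {r : α → α → Prop}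

def IsNormalForm (r : α → α → Prop) (a : α) : Prop := ∀ b, ¬ r a b

theorem Relation.ReflTransGen.le_of_rel_lt (hlt : ∀ a b, r a b → b < a) {a b : α}
    (hab : ReflTransGen r a b) : b ≤ a := by
  induction hab with
  | refl => exact le_rfl
  | tail _ hbc ih => exact (hlt _ _ hbc).le.trans ih

theorem IsNormalForm.le_of_reflTransGen
    (hstable : ∀ p a b, IsNormalForm r p → p ≤ a → r a b → p ≤ b)
    {p a b : α} (hp : IsNormalForm r p) (hpa : p ≤ a) (hab : ReflTransGen r a b) : p ≤ b := by
  induction hab with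
  | refl => exact hpa
  | tail _ hbc ih => exact hstable _ _ _ hp ih hbc

variable [WellFoundedLT α]

theorem not_forall_rel_succ_of_rel_lt (hlt : ∀ a b, r a b → b < a) (f : ℕ → α) :
    ¬ ∀ i, r (f i) (f (i + 1)) := fun h =>
  not_strictAnti_of_wellFoundedLT f (strictAnti_nat_of_succ_lt fun i => hlt _ _ (h i))

theorem exists_reflTransGen_isNormalForm (hlt : ∀ a b, r a b → b < a) (a : α) :
    ∃ n, ReflTransGen r a n ∧ IsNormalForm r n := by
  obtain ⟨n, han, hmin⟩ := wellFounded_lt.has_min {b | ReflTransGen r a b} ⟨a, .refl⟩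
  exact ⟨n, han, fun b hnb => hmin b (han.tail hnb) (hlt _ _ hnb)⟩

theorem join_of_rel_lt_of_isNormalForm_le (hlt : ∀ a b, r a b → b < a)
    (hstable : ∀ p a b, IsNormalForm r p → p ≤ a → r a b → p ≤ b)
    {a b c : α} (hab : ReflTransGen r a b) (hac : ReflTransGen r a c) :
    Join (ReflTransGen r) b c := by
  obtain ⟨m, hbm, hm⟩ := exists_reflTransGen_isNormalForm hlt b
  obtain ⟨n, hcn, hn⟩ := exists_reflTransGen_isNormalForm hlt c
  have ham := hab.trans hbm
  have han := hac.trans hcn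
  have hmn : m ≤ n := hm.le_of_reflTransGen hstable (ham.le_of_rel_lt hlt) han
  have hnm : n ≤ m := hn.le_of_reflTransGen hstable (han.le_of_rel_lt hlt) ham
  exact ⟨m, hbm, le_antisymm hnm hmn ▸ hcn⟩

end Abstract

section Forcing

variable {V : Type} [DecidableEq V] {t : ℕ}

theorem forceRule_le (u v : V) (L : V → Finset (Fin t)) : forceRule t u v L ≤ L := by
  intro z
  unfold forceRule
  split_ifs with hz <;> simp [hz, Finset.sdiff_subset]

theorem Finset.eq_empty_or_eq_of_subset_of_card_eq_one {α : Type*} {s s' : Finset α}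
    (h : s ⊆ s') (hs' : s'.card = 1) : s = ∅ ∨ s = s' := by
  obtain ⟨a, rfl⟩ := Finset.card_eq_one.mp hs'
  exact Finset.subset_singleton_iff.mp h

theorem monotone_forceRule (u v : V) : Monotone (forceRule t u v) := by
  intro L L' hL z
  by_cases hz : z = v
  · subst hz
    by_cases h1 : (L' u).card = 1
    · rcases Finset.eq_empty_or_eq_of_subset_of_card_eq_one (hL u) h1 with h | h
      · simp [forceRule, h]
      · simpa [forceRule, h, h1] using Finset.sdiff_subset_sdiff (hL z) subset_rfl
    by_cases h0 : L' u = ∅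
    · simp [forceRule, h0, Finset.subset_empty.mp (h0 ▸ hL u)]
    calc forceRule t u z L z ⊆ L z := forceRule_le u z L z
      _ ⊆ L' z := hL z
      _ = forceRule t u z L' z := by simp [forceRule, h1, h0]
  · simpa [forceRule, hz] using hL z

theorem reduces_lt {G : SimpleGraph V} {L L' : V → Finset (Fin t)} (h : Reduces G t L L') :
    L' < L := by
  obtain ⟨hne, u, v, -, rfl⟩ := h
  exact lt_of_le_of_ne (forceRule_le u v L) hne

theorem IsNormalForm.le_of_reduces {G : SimpleGraph V} {P L L' : V → Finset (Fin t)}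
    (hP : IsNormalForm (Reduces G t) P) (hPL : P ≤ L) (h : Reduces G t L L') : P ≤ L' := by
  obtain ⟨-, u, v, huv, rfl⟩ := h
  have hfix : forceRule t u v P = P := by
    by_contra hne
    exact hP _ ⟨hne, u, v, huv, rfl⟩
  exact hfix ▸ monotone_forceRule u v hPL

end Forcing

theorem statement15_general {V : Type} [Fintype V] [DecidableEq V] (G : SimpleGraph V)
    (t : ℕ) :
    (∀ f : ℕ → (V → Finset (Fin t)), ¬ ∀ i : ℕ, Reduces G t (f i) (f (i + 1))) ∧
    (∀ L L₁ L₂ : V → Finset (Fin t),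
      Relation.ReflTransGen (Reduces G t) L L₁ →
      Relation.ReflTransGen (Reduces G t) L L₂ →
      ∃ L' : V → Finset (Fin t),
        Relation.ReflTransGen (Reduces G t) L₁ L' ∧
        Relation.ReflTransGen (Reduces G t) L₂ L') :=
  ⟨fun f => not_forall_rel_succ_of_rel_lt (fun _ _ => reduces_lt) f,
    fun _ _ _ h₁ h₂ => join_of_rel_lt_of_isNormalForm_le (fun _ _ => reduces_lt)
      (fun _ _ _ => IsNormalForm.le_of_reduces) h₁ h₂⟩

/-- For a finite simple graph `G` and color set `{1,…,t}`, the reduction relation `⇒` on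
list assignments is terminating (no infinite reduction chain) and confluent. -/
theorem statement15 {V : Type} [Fintype V] [DecidableEq V] (G : SimpleGraph V)
    (t : ℕ) (ht : 1 ≤ t) :
    (∀ f : ℕ → (V → Finset (Fin t)), ¬ ∀ i : ℕ, Reduces G t (f i) (f (i + 1))) ∧
    (∀ L L₁ L₂ : V → Finset (Fin t),
      Relation.ReflTransGen (Reduces G t) L L₁ →
      Relation.ReflTransGen (Reduces G t) L L₂ →
      ∃ L' : V → Finset (Fin t),
        Relation.ReflTransGen (Reduces G t) L₁ L' ∧
        Relation.ReflTransGen (Reduces G t) L₂ L') :=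
  statement15_general G t
end

section
/- Fix a finite simple graph G on vertex set V and an integer t ≥ 1. Every list assignment L = (L_v)_{v∈V} has a unique normal form L*: there exists exactly one list assignment L* such that L ⇒* L* and L* is irreducible (no list assignment L'' satisfies L* ⇒ L''), where ⇒* denotes the reflexive-transitive closure of the reduction relation ⇒. -/
namespace Relation

variable {α : Type*} {r : α → α → Prop}

theorem ReflTransGen.eq_of_forall_not {a b : α} (ha : ∀ c, ¬ r a c)
    (h : ReflTransGen r a b) : b = a := by
  rcases h.cases_head with rfl | ⟨c, hac, -⟩
  · rfl
  · exact absurd hac (ha c)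

theorem newman (hwf : WellFounded (flip r))
    (hlc : ∀ a b c, r a b → r a c → Join (ReflTransGen r) b c) {a b c : α}
    (hab : ReflTransGen r a b) (hac : ReflTransGen r a c) : Join (ReflTransGen r) b c := by
  induction a using hwf.induction generalizing b c with
  | _ a ih =>
    rcases hab.cases_head with rfl | ⟨b', hab', hb'b⟩
    · exact ⟨c, hac, .refl⟩
    rcases hac.cases_head with rfl | ⟨c', hac', hc'c⟩
    · exact ⟨b, .refl, .head hab' hb'b⟩
    obtain ⟨d, hb'd, hc'd⟩ := hlc _ _ _ hab' hac'
    obtain ⟨e, hbe, hde⟩ := ih b' hab' hb'b hb'd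
    obtain ⟨f, hef, hcf⟩ := ih c' hac' (hc'd.trans hde) hc'c
    exact ⟨f, hbe.trans hef, hcf⟩

theorem existsUnique_normal_form (hwf : WellFounded (flip r))
    (hlc : ∀ a b c, r a b → r a c → Join (ReflTransGen r) b c) (a : α) :
    ∃! b, ReflTransGen r a b ∧ ∀ c, ¬ r b c := by
  obtain ⟨b, hab, hmin⟩ := hwf.has_min {b | ReflTransGen r a b} ⟨a, .refl⟩
  have hb : ∀ c, ¬ r b c := fun c hbc => hmin c (hab.tail hbc) hbc
  refine ⟨b, ⟨hab, hb⟩, ?_⟩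
  rintro b' ⟨hab', hb'⟩
  obtain ⟨d, hb'd, hbd⟩ := newman hwf hlc hab' hab
  exact (hb'd.eq_of_forall_not hb').symm.trans (hbd.eq_of_forall_not hb)

end Relation

open Relation

section Forcing

variable {t : ℕ}

def forceList (A B : Finset (Fin t)) : Finset (Fin t) :=
  if A.card = 1 then B \ A else if A = ∅ then ∅ else B

theorem forceList_subset (A B : Finset (Fin t)) : forceList A B ⊆ B := by
  unfold forceList
  split_ifs
  exacts [Finset.sdiff_subset, Finset.empty_subset _, subset_rfl]

@[simp] theorem forceList_empty_left (B : Finset (Fin t)) : forceList ∅ B = ∅ := by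
  simp [forceList]

@[simp] theorem forceList_empty_right (A : Finset (Fin t)) : forceList A ∅ = ∅ :=
  Finset.subset_empty.mp (forceList_subset A ∅)

theorem forceList_comm (A A' B : Finset (Fin t)) :
    forceList A (forceList A' B) = forceList A' (forceList A B) := by
  unfold forceList
  split_ifs <;> simp_all [sdiff_sdiff_comm]

@[simp] theorem forceList_idem (A B : Finset (Fin t)) :
    forceList A (forceList A B) = forceList A B := by
  unfold forceList
  split_ifs <;> simp_all

theorem card_le_one_of_forceList_ne {A B : Finset (Fin t)} (h : forceList A B ≠ B) :
    A.card ≤ 1 := by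
  unfold forceList at h
  split_ifs at h with h1 h2
  · exact h1.le
  · simp [h2]
  · exact absurd rfl h

theorem forceList_eq_empty {A B C : Finset (Fin t)} (hAB : forceList A B ≠ B)
    (hBC : forceList B C ≠ C) : forceList A B = ∅ := by
  have hlt := Finset.card_lt_card ((forceList_subset A B).ssubset_of_ne hAB)
  have := card_le_one_of_forceList_ne hBC
  exact Finset.card_eq_zero.mp (by omega)

variable {V : Type} [DecidableEq V] {G : SimpleGraph V}

theorem forceRule_eq_update (u v : V) (L : V → Finset (Fin t)) :
    forceRule t u v L = Function.update L v (forceList (L u) (L v)) := by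
  funext z
  rw [Function.update_apply]
  rfl

theorem reflTransGen_reduces_forceRule {u v : V} (h : G.Adj u v) (L : V → Finset (Fin t)) :
    ReflTransGen (Reduces G t) L (forceRule t u v L) := by
  by_cases he : forceRule t u v L = L
  · rw [he]
  · exact .single ⟨he, u, v, h, rfl⟩

theorem Reduces.lt {L L' : V → Finset (Fin t)} (h : Reduces G t L L') : L' < L := by
  obtain ⟨hne, u, v, -, rfl⟩ := h
  rw [forceRule_eq_update] at hne ⊢
  rw [Ne, Function.update_eq_self_iff] at hne
  exact update_lt_self_iff.2 ((forceList_subset _ _).ssubset_of_ne hne)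

theorem wellFounded_flip_reduces [Finite V] : WellFounded (flip (Reduces G t)) :=
  Subrelation.wf (fun h => Reduces.lt h) wellFounded_lt

theorem forceRule_forceRule_forceRule {u₁ v₁ u₂ v₂ : V} {L : V → Finset (Fin t)}
    (huv₁ : u₁ ≠ v₁) (huv₂ : u₂ ≠ v₂) (h₁ : forceRule t u₁ v₁ L ≠ L)
    (h₂ : forceRule t u₂ v₂ L ≠ L) (h : u₁ = v₂ → u₂ = v₁) :
    forceRule t u₂ v₂ (forceRule t u₁ v₁ (forceRule t u₂ v₂ L)) =
      forceRule t u₂ v₂ (forceRule t u₁ v₁ L) := by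
  simp only [forceRule_eq_update, ne_eq, Function.update_eq_self_iff] at *
  -- An effective step into the source of another effective step empties it (`forceList_eq_empty`),
  -- and `∅` is absorbing for `forceList` on both sides.
  have e₁ : v₁ = u₂ → forceList (L u₁) (L v₁) = ∅ := fun he =>
    forceList_eq_empty h₁ (he ▸ h₂)
  have e₂ : v₂ = u₁ → forceList (L u₂) (L v₂) = ∅ := fun he =>
    forceList_eq_empty h₂ (he ▸ h₁)
  funext z
  simp only [Function.update_apply]
  split_ifs <;> subst_vars <;> simp_all [forceList_comm]

theorem Reduces.join {L L₁ L₂ : V → Finset (Fin t)} (h₁ : Reduces G t L L₁)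
    (h₂ : Reduces G t L L₂) : Join (ReflTransGen (Reduces G t)) L₁ L₂ := by
  obtain ⟨hne₁, u₁, v₁, ha₁, rfl⟩ := h₁
  obtain ⟨hne₂, u₂, v₂, ha₂, rfl⟩ := h₂
  by_cases h : u₁ = v₂ → u₂ = v₁
  · refine ⟨_, reflTransGen_reduces_forceRule ha₂ _, ?_⟩
    rw [← forceRule_forceRule_forceRule ha₁.ne ha₂.ne hne₁ hne₂ h]
    exact (reflTransGen_reduces_forceRule ha₁ _).trans (reflTransGen_reduces_forceRule ha₂ _)
  · refine ⟨_, ?_, reflTransGen_reduces_forceRule ha₁ _⟩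
    rw [← forceRule_forceRule_forceRule ha₂.ne ha₁.ne hne₂ hne₁ (by tauto)]
    exact (reflTransGen_reduces_forceRule ha₂ _).trans (reflTransGen_reduces_forceRule ha₁ _)

end Forcing

theorem statement16_general {V : Type} [Fintype V] [DecidableEq V] (G : SimpleGraph V)
    (t : ℕ) (L : V → Finset (Fin t)) :
    ∃! Lstar : V → Finset (Fin t),
      Relation.ReflTransGen (Reduces G t) L Lstar ∧
      ∀ L'' : V → Finset (Fin t), ¬ Reduces G t Lstar L'' :=
  existsUnique_normal_form wellFounded_flip_reduces (fun _ _ _ => Reduces.join) L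

/-- For a finite simple graph `G` and color set `{1,…,t}`, every list assignment `L` has a
unique normal form: exactly one irreducible `L*` with `L ⇒* L*`. -/
theorem statement16 {V : Type} [Fintype V] [DecidableEq V] (G : SimpleGraph V)
    (t : ℕ) (ht : 1 ≤ t) (L : V → Finset (Fin t)) :
    ∃! Lstar : V → Finset (Fin t),
      Relation.ReflTransGen (Reduces G t) L Lstar ∧
      ∀ L'' : V → Finset (Fin t), ¬ Reduces G t Lstar L'' :=
  statement16_general G t L
end

section
/- Fix a finite simple graph G on vertex set V and an integer t ≥ 1, and for an oriented edge e of G let R_e denote the direct forcing operator acting on list assignments. Then for every pair of oriented edges e₁ and e₂ of G, the operators satisfy the identity R_{e₁} ∘ R_{e₂} ∘ R_{e₁} = R_{e₂} ∘ R_{e₁} ∘ R_{e₂} as maps on list assignments (applying first R_{e₁}, then R_{e₂}, then R_{e₁} yields the same list assignment as applying first R_{e₂}, then R_{e₁}, then R_{e₂}). -/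
open Finset

theorem Finset.eq_empty_or_exists_eq_singleton_or_nontrivial {α : Type*} (s : Finset α) :
    s = ∅ ∨ (∃ a, s = {a}) ∨ s.Nontrivial :=
  s.eq_empty_or_nonempty.imp_right Nonempty.exists_eq_singleton_or_nontrivial

section forceStep

variable {α : Type*} [DecidableEq α]

def forceStep (s x : Finset α) : Finset α :=
  if s.card = 1 then x \ s else if s = ∅ then ∅ else x

@[simp]
theorem forceStep_empty_left (x : Finset α) : forceStep ∅ x = ∅ := by
  simp [forceStep]

@[simp]
theorem forceStep_singleton (p : α) (x : Finset α) : forceStep {p} x = x.erase p := by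
  simp [forceStep, sdiff_singleton_eq_erase]

theorem forceStep_of_nontrivial {s : Finset α} (hs : s.Nontrivial) (x : Finset α) :
    forceStep s x = x := by
  have hcard : s.card ≠ 1 := (one_lt_card_iff_nontrivial.2 hs).ne'
  simp [forceStep, hcard, hs.nonempty.ne_empty]

@[simp]
theorem forceStep_empty_right (s : Finset α) : forceStep s ∅ = ∅ := by
  rcases s.eq_empty_or_exists_eq_singleton_or_nontrivial with rfl | ⟨p, rfl⟩ | hs
  · simp
  · simp
  · exact forceStep_of_nontrivial hs ∅

theorem forceStep_forceStep_self (s x : Finset α) :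
    forceStep s (forceStep s x) = forceStep s x := by
  rcases s.eq_empty_or_exists_eq_singleton_or_nontrivial with rfl | ⟨p, rfl⟩ | hs
  · simp
  · simp
  · simp only [forceStep_of_nontrivial hs]

theorem forceStep_braid (a b x : Finset α) :
    forceStep a (forceStep b (forceStep a x)) = forceStep b (forceStep a (forceStep b x)) := by
  rcases a.eq_empty_or_exists_eq_singleton_or_nontrivial with rfl | ⟨p, rfl⟩ | ha <;>
    rcases b.eq_empty_or_exists_eq_singleton_or_nontrivial with rfl | ⟨q, rfl⟩ | hb <;>
    simp [forceStep_of_nontrivial, erase_right_comm, *]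

theorem forceStep_singleton_right_eq_empty_or_self (s : Finset α) (p : α) :
    forceStep s {p} = ∅ ∨ forceStep s {p} = {p} := by
  rcases s.eq_empty_or_exists_eq_singleton_or_nontrivial with rfl | ⟨q, rfl⟩ | hs
  · simp
  · by_cases h : q = p <;> simp [h, erase_eq_of_notMem]
  · exact Or.inr (forceStep_of_nontrivial hs _)

theorem forceStep_singleton_right_of_notMem {s : Finset α} {p : α} (hs : s.Nonempty)
    (hp : p ∉ s) : forceStep s {p} = {p} := by
  rcases s.eq_empty_or_exists_eq_singleton_or_nontrivial with rfl | ⟨q, rfl⟩ | hs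
  · simp at hs
  · rw [forceStep_singleton, erase_eq_of_notMem (by simpa [eq_comm] using hp)]
  · exact forceStep_of_nontrivial hs _

theorem forceStep_chain (a b x : Finset α) :
    forceStep (forceStep a b) (forceStep b x) = forceStep (forceStep a b) x := by
  rcases b.eq_empty_or_exists_eq_singleton_or_nontrivial with rfl | ⟨q, rfl⟩ | hb
  · simp
  · rcases forceStep_singleton_right_eq_empty_or_self a q with h | h <;> simp [h]
  · rw [forceStep_of_nontrivial hb]

theorem forceStep_cycle (a b : Finset α) :
    forceStep (forceStep (forceStep a b) a) (forceStep a b) = forceStep (forceStep b a) b := by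
  rcases a.eq_empty_or_exists_eq_singleton_or_nontrivial with rfl | ⟨p, rfl⟩ | ha
  · simp
  · rcases b.eq_empty_or_exists_eq_singleton_or_nontrivial with rfl | ⟨q, rfl⟩ | hb
    · simp
    · by_cases h : p = q
      · simp [h]
      · simp [h, Ne.symm h, erase_eq_of_notMem]
    · rw [forceStep_singleton, forceStep_of_nontrivial hb, forceStep_singleton,
        forceStep_singleton_right_of_notMem hb.erase_nonempty (notMem_erase p b),
        forceStep_singleton, erase_idem]
  · simp only [forceStep_of_nontrivial ha]

end forceStep

section forceRule

variable {V : Type} [DecidableEq V] {t : ℕ}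

@[simp]
theorem forceRule_apply_self (u v : V) (L : V → Finset (Fin t)) :
    forceRule t u v L v = forceStep (L u) (L v) := by
  simp [forceRule, forceStep]

@[simp]
theorem forceRule_apply_of_ne {u v z : V} (h : z ≠ v) (L : V → Finset (Fin t)) :
    forceRule t u v L z = L z := by
  simp [forceRule, h]

theorem forceRule_idem {u v : V} (huv : u ≠ v) (L : V → Finset (Fin t)) :
    forceRule t u v (forceRule t u v L) = forceRule t u v L := by
  funext z
  by_cases hz : z = v
  · subst hz
    simp [huv, forceStep_forceStep_self]
  · simp [hz]

theorem forceRule_comm {u₁ v₁ u₂ v₂ : V} (h₁₂ : u₁ ≠ v₂) (h₂₁ : u₂ ≠ v₁) (hv : v₁ ≠ v₂)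
    (L : V → Finset (Fin t)) :
    forceRule t u₁ v₁ (forceRule t u₂ v₂ L) = forceRule t u₂ v₂ (forceRule t u₁ v₁ L) := by
  funext z
  by_cases hz₁ : z = v₁
  · subst hz₁
    simp [h₁₂, hv]
  by_cases hz₂ : z = v₂
  · subst hz₂
    simp [h₂₁, hv.symm]
  simp [hz₁, hz₂]

theorem forceRule_braid_of_head_eq {u₁ u₂ v : V} (h₁ : u₁ ≠ v) (h₂ : u₂ ≠ v)
    (L : V → Finset (Fin t)) :
    forceRule t u₁ v (forceRule t u₂ v (forceRule t u₁ v L)) =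
      forceRule t u₂ v (forceRule t u₁ v (forceRule t u₂ v L)) := by
  funext z
  by_cases hz : z = v
  · subst hz
    simp [h₁, h₂, forceStep_braid]
  · simp [hz]

theorem forceRule_braid_of_path {u v w : V} (huv : u ≠ v) (hvw : v ≠ w) (huw : u ≠ w)
    (L : V → Finset (Fin t)) :
    forceRule t u v (forceRule t v w (forceRule t u v L)) =
      forceRule t v w (forceRule t u v (forceRule t v w L)) := by
  funext z
  by_cases hzv : z = v
  · subst hzv
    simp [huv, huw, hvw, forceStep_forceStep_self]
  by_cases hzw : z = w
  · subst hzw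
    simp [huw, hvw, hvw.symm, forceStep_chain]
  simp [hzv, hzw]

theorem forceRule_braid_of_cycle {u v : V} (huv : u ≠ v) (L : V → Finset (Fin t)) :
    forceRule t u v (forceRule t v u (forceRule t u v L)) =
      forceRule t v u (forceRule t u v (forceRule t v u L)) := by
  funext z
  by_cases hzv : z = v
  · subst hzv
    simp [huv, huv.symm, forceStep_cycle]
  by_cases hzu : z = u
  · subst hzu
    simp [huv, huv.symm, forceStep_cycle]
  simp [hzv, hzu]

theorem forceRule_braid {u₁ v₁ u₂ v₂ : V} (h₁ : u₁ ≠ v₁) (h₂ : u₂ ≠ v₂)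
    (L : V → Finset (Fin t)) :
    forceRule t u₁ v₁ (forceRule t u₂ v₂ (forceRule t u₁ v₁ L)) =
      forceRule t u₂ v₂ (forceRule t u₁ v₁ (forceRule t u₂ v₂ L)) := by
  rcases eq_or_ne v₁ v₂ with rfl | hv
  · exact forceRule_braid_of_head_eq h₁ h₂ L
  rcases eq_or_ne u₂ v₁ with rfl | h₂₁ <;> rcases eq_or_ne u₁ v₂ with rfl | h₁₂
  · exact forceRule_braid_of_cycle h₁ L
  · exact forceRule_braid_of_path h₁ h₂ h₁₂ L
  · exact (forceRule_braid_of_path h₂ h₁ h₂₁ L).symm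
  · rw [forceRule_comm h₁₂ h₂₁ hv (forceRule t u₁ v₁ L), forceRule_idem h₁,
      forceRule_comm h₁₂ h₂₁ hv L, forceRule_idem h₂]

end forceRule

theorem statement18_general {V : Type} [DecidableEq V] (G : SimpleGraph V)
    (t : ℕ) (u₁ v₁ u₂ v₂ : V) (h₁ : G.Adj u₁ v₁) (h₂ : G.Adj u₂ v₂)
    (L : V → Finset (Fin t)) :
    forceRule t u₁ v₁ (forceRule t u₂ v₂ (forceRule t u₁ v₁ L)) =
      forceRule t u₂ v₂ (forceRule t u₁ v₁ (forceRule t u₂ v₂ L)) :=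
  forceRule_braid h₁.ne h₂.ne L

/-- For every pair of oriented edges `e₁ = (u₁,v₁)` and `e₂ = (u₂,v₂)` of `G`, the direct
forcing operators satisfy the braid identity: applying first `R_{e₁}`, then `R_{e₂}`, then
`R_{e₁}` yields the same list assignment as applying first `R_{e₂}`, then `R_{e₁}`, then
`R_{e₂}`. -/
theorem statement18 {V : Type} [Fintype V] [DecidableEq V] (G : SimpleGraph V)
    (t : ℕ) (ht : 1 ≤ t) (u₁ v₁ u₂ v₂ : V) (h₁ : G.Adj u₁ v₁) (h₂ : G.Adj u₂ v₂)
    (L : V → Finset (Fin t)) :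
    forceRule t u₁ v₁ (forceRule t u₂ v₂ (forceRule t u₁ v₁ L)) =
      forceRule t u₂ v₂ (forceRule t u₁ v₁ (forceRule t u₂ v₂ L)) :=
  statement18_general G t u₁ v₁ u₂ v₂ h₁ h₂ L
end
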